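/- arXiv:1504.04784 — 4 statements merged into one kernel-verified Lean document; each statement's English description precedes it below -/
import Mathlib

section
/- Let u₁, u₂ be smooth complex-valued solutions on an open connected set U ⊂ ℝⁿ × ℝ of the Schrödinger equations ih ∂uⱼ/∂t + (h²/2m)Δuⱼ − eVⱼ(x,t)uⱼ = 0 (j = 1,2) with real potentials V₁, V₂. Suppose |u₁(x,t)| = |u₂(x,t)| > 0 on U and u₁ = u₂ on the initial slice U ∩ {t = t₀}. Write uⱼ = R e^{iΦⱼ} with R = |u₁| = |u₂| > 0 and V₁ = V₂ on U. Then the phases Φ₁ and Φ₂ satisfy the same first-order PDE h ∂Φ/∂t · R = (h²/2m)(ΔR − R|∇Φ|²) − eVR with the same initial data, hence Φ₁ = Φ₂ and u₁ = u₂ on U (assuming uniqueness for this Cauchy problem). -/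
open Set

open Complex

lemma fderiv_polar_apply {n : ℕ} {r φ : (Fin n → ℝ) → ℝ} {g : (Fin n → ℝ) → ℂ}
    {s : Set (Fin n → ℝ)} (hs : IsOpen s)
    (hr : ContDiffOn ℝ (⊤ : ℕ∞) r s) (hφ : ContDiffOn ℝ (⊤ : ℕ∞) φ s)
    (hg : ∀ z ∈ s, g z = r z * Complex.exp (Complex.I * φ z))
    {y : Fin n → ℝ} (hy : y ∈ s) (v : Fin n → ℝ) :
    fderiv ℝ g y v
      = (fderiv ℝ r y v + Complex.I * r y * fderiv ℝ φ y v)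
          * Complex.exp (Complex.I * φ y) := by
  have hrd : HasFDerivAt r (fderiv ℝ r y) y :=
    ((hr.contDiffAt (hs.mem_nhds hy)).differentiableAt (by simp)).hasFDerivAt
  have hφd : HasFDerivAt φ (fderiv ℝ φ y) y :=
    ((hφ.contDiffAt (hs.mem_nhds hy)).differentiableAt (by simp)).hasFDerivAt
  have h1 : HasFDerivAt (fun z => (r z : ℂ)) (Complex.ofRealCLM.comp (fderiv ℝ r y)) y :=
    Complex.ofRealCLM.hasFDerivAt.comp y hrd
  have h2 : HasFDerivAt (fun z => ((φ z : ℂ)))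
      (Complex.ofRealCLM.comp (fderiv ℝ φ y)) y :=
    Complex.ofRealCLM.hasFDerivAt.comp y hφd
  have h3 := (h2.const_mul Complex.I).cexp
  have h4 := h1.mul h3
  have hev : g =ᶠ[nhds y] fun z => (r z : ℂ) * Complex.exp (Complex.I * φ z) := by
    filter_upwards [hs.mem_nhds hy] with z hz using hg z hz
  rw [hev.fderiv_eq (𝕜 := ℝ), HasFDerivAt.fderiv (f := fun z => (r z : ℂ) * Complex.exp (Complex.I * φ z)) h4]
  simp [ContinuousLinearMap.smul_apply, smul_eq_mul]
  ring

lemma lap_polar_summand {n : ℕ} {r φ : (Fin n → ℝ) → ℝ} {g : (Fin n → ℝ) → ℂ}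
    {s : Set (Fin n → ℝ)} (hs : IsOpen s)
    (hr : ContDiffOn ℝ (⊤ : ℕ∞) r s) (hφ : ContDiffOn ℝ (⊤ : ℕ∞) φ s)
    (hg : ∀ z ∈ s, g z = r z * Complex.exp (Complex.I * φ z))
    {x₀ : Fin n → ℝ} (hx : x₀ ∈ s) (v : Fin n → ℝ) :
    fderiv ℝ (fun y => fderiv ℝ g y v) x₀ v
      = ((fderiv ℝ (fun y => fderiv ℝ r y v) x₀ v : ℂ)
          + Complex.I * (2 * fderiv ℝ r x₀ v * fderiv ℝ φ x₀ v
              + r x₀ * fderiv ℝ (fun y => fderiv ℝ φ y v) x₀ v)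
          - r x₀ * (fderiv ℝ φ x₀ v) ^ 2)
        * Complex.exp (Complex.I * φ x₀) := by
  have hrc : ContDiffAt ℝ (⊤ : ℕ∞) r x₀ := hr.contDiffAt (hs.mem_nhds hx)
  have hφc : ContDiffAt ℝ (⊤ : ℕ∞) φ x₀ := hφ.contDiffAt (hs.mem_nhds hx)
  -- differentiability of y ↦ fderiv r y v
  have hDr : DifferentiableAt ℝ (fun y => fderiv ℝ r y v) x₀ :=
    ((hrc.fderiv_right (m := 1) (by exact WithTop.coe_le_coe.mpr le_top)).differentiableAt one_ne_zero).clm_apply (differentiableAt_const v)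
  have hDφ : DifferentiableAt ℝ (fun y => fderiv ℝ φ y v) x₀ :=
    ((hφc.fderiv_right (m := 1) (by exact WithTop.coe_le_coe.mpr le_top)).differentiableAt one_ne_zero).clm_apply (differentiableAt_const v)
  have c1 : HasFDerivAt (fun y => ((fderiv ℝ r y v : ℝ) : ℂ))
      (Complex.ofRealCLM.comp (fderiv ℝ (fun y => fderiv ℝ r y v) x₀)) x₀ :=
    Complex.ofRealCLM.hasFDerivAt.comp x₀ hDr.hasFDerivAt
  have c3 : HasFDerivAt (fun y => ((fderiv ℝ φ y v : ℝ) : ℂ))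
      (Complex.ofRealCLM.comp (fderiv ℝ (fun y => fderiv ℝ φ y v) x₀)) x₀ :=
    Complex.ofRealCLM.hasFDerivAt.comp x₀ hDφ.hasFDerivAt
  have c2 : HasFDerivAt (fun y => (r y : ℂ))
      (Complex.ofRealCLM.comp (fderiv ℝ r x₀)) x₀ :=
    Complex.ofRealCLM.hasFDerivAt.comp x₀
      ((hrc.differentiableAt (by simp)).hasFDerivAt)
  have c5 : HasFDerivAt (fun y => ((φ y : ℝ) : ℂ))
      (Complex.ofRealCLM.comp (fderiv ℝ φ x₀)) x₀ :=
    Complex.ofRealCLM.hasFDerivAt.comp x₀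
      ((hφc.differentiableAt (by simp)).hasFDerivAt)
  have c4 := (c5.const_mul Complex.I).cexp
  have big := ((c1.add ((c2.const_mul Complex.I).mul c3)).mul c4)
  have hev : (fun y => fderiv ℝ g y v) =ᶠ[nhds x₀]
      fun y => ((fderiv ℝ r y v : ℂ) + Complex.I * r y * fderiv ℝ φ y v)
        * Complex.exp (Complex.I * φ y) := by
    filter_upwards [hs.mem_nhds hx] with z hz using
      fderiv_polar_apply hs hr hφ hg hz v
  rw [hev.fderiv_eq (𝕜 := ℝ)]
  have : (fun y => ((fderiv ℝ r y v : ℂ) + Complex.I * r y * fderiv ℝ φ y v)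
        * Complex.exp (Complex.I * φ y))
      = fun y => ((fderiv ℝ r y v : ℂ) + Complex.I * (r y : ℂ) * (fderiv ℝ φ y v : ℂ))
        * Complex.exp (Complex.I * (φ y : ℂ)) := rfl
  rw [this, HasFDerivAt.fderiv (f := fun y => ((fderiv ℝ r y v : ℂ) + Complex.I * (r y : ℂ) * (fderiv ℝ φ y v : ℂ))
        * Complex.exp (Complex.I * (φ y : ℂ))) big]
  simp [ContinuousLinearMap.smul_apply, smul_eq_mul]
  ring_nf
  rw [Complex.I_sq]
  ring

lemma deriv_polar {ρ ψ : ℝ → ℝ} {w : ℝ → ℂ} {s : Set ℝ} (hs : IsOpen s)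
    (hρ : ContDiffOn ℝ (⊤ : ℕ∞) ρ s) (hψ : ContDiffOn ℝ (⊤ : ℕ∞) ψ s)
    (hw : ∀ τ ∈ s, w τ = ρ τ * Complex.exp (Complex.I * ψ τ))
    {t : ℝ} (ht : t ∈ s) :
    deriv w t = (((deriv ρ t : ℝ) : ℂ) + Complex.I * (ρ t : ℝ) * ((deriv ψ t : ℝ) : ℂ))
        * Complex.exp (Complex.I * ψ t) := by
  have hρd : HasDerivAt ρ (deriv ρ t) t :=
    ((hρ.contDiffAt (hs.mem_nhds ht)).differentiableAt (by simp)).hasDerivAt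
  have hψd : HasDerivAt ψ (deriv ψ t) t :=
    ((hψ.contDiffAt (hs.mem_nhds ht)).differentiableAt (by simp)).hasDerivAt
  have h3 := (hψd.ofReal_comp.const_mul Complex.I).cexp
  have h4 := hρd.ofReal_comp.mul h3
  have hev : w =ᶠ[nhds t] fun τ => (ρ τ : ℂ) * Complex.exp (Complex.I * ψ τ) := by
    filter_upwards [hs.mem_nhds ht] with τ hτ using hw τ hτ
  rw [hev.deriv_eq, HasDerivAt.deriv (f := fun τ => (ρ τ : ℂ) * Complex.exp (Complex.I * ψ τ)) h4]
  ring



/-- Spatial Laplacian of a real-valued function on `ℝⁿ`. -/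
noncomputable def lapR {n : ℕ} (f : (Fin n → ℝ) → ℝ) (x : Fin n → ℝ) : ℝ :=
  ∑ j : Fin n,
    fderiv ℝ (fun y => fderiv ℝ f y (Pi.single j 1)) x (Pi.single j 1)

/-- Spatial Laplacian of a complex-valued function on `ℝⁿ`. -/
noncomputable def lapC {n : ℕ} (f : (Fin n → ℝ) → ℂ) (x : Fin n → ℝ) : ℂ :=
  ∑ j : Fin n,
    fderiv ℝ (fun y => fderiv ℝ f y (Pi.single j 1)) x (Pi.single j 1)

/-- The Hamilton–Jacobi type phase equation
`h ∂ₜΦ · R = (h²/2m)(ΔR − R|∇Φ|²) − eVR` at a space-time point. -/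
def phasePDE {n : ℕ} (h e m : ℝ) (V : (Fin n → ℝ) → ℝ → ℝ)
    (R Φ : (Fin n → ℝ) → ℝ → ℝ) (p : (Fin n → ℝ) × ℝ) : Prop :=
  h * deriv (fun t => Φ p.1 t) p.2 * R p.1 p.2
    = (h ^ 2 / (2 * m)) *
        (lapR (fun y => R y p.2) p.1
          - R p.1 p.2 *
            ∑ j : Fin n,
              (fderiv ℝ (fun y => Φ y p.2) p.1 (Pi.single j 1)) ^ 2)
      - e * V p.1 p.2 * R p.1 p.2

lemma phase_of_schrodinger {n : ℕ} (h e m : ℝ)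
    (U : Set ((Fin n → ℝ) × ℝ)) (hU : IsOpen U)
    (u : (Fin n → ℝ) → ℝ → ℂ) (V : (Fin n → ℝ) → ℝ → ℝ)
    (R Φ : (Fin n → ℝ) → ℝ → ℝ)
    (hR : ContDiffOn ℝ (⊤ : ℕ∞) (fun p : (Fin n → ℝ) × ℝ => R p.1 p.2) U)
    (hΦ : ContDiffOn ℝ (⊤ : ℕ∞) (fun p : (Fin n → ℝ) × ℝ => Φ p.1 p.2) U)
    (heq : ∀ p ∈ U,
      Complex.I * h * deriv (u p.1) p.2
        + (h ^ 2 / (2 * m)) * lapC (fun y => u y p.2) p.1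
        - e * V p.1 p.2 * u p.1 p.2 = 0)
    (hpolar : ∀ p ∈ U, u p.1 p.2 = R p.1 p.2 * Complex.exp (Complex.I * Φ p.1 p.2))
    {p : (Fin n → ℝ) × ℝ} (hp : p ∈ U) : phasePDE h e m V R Φ p := by
  obtain ⟨x, t⟩ := p
  -- (no simp needed)
  -- spatial slice
  set sx : Set (Fin n → ℝ) := {y | (y, t) ∈ U} with hsx
  have hsxo : IsOpen sx := hU.preimage (by fun_prop : Continuous fun y : Fin n → ℝ => (y, t))
  have hxs : x ∈ sx := hp
  have hrs : ContDiffOn ℝ (⊤ : ℕ∞) (fun y => R y t) sx :=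
    hR.comp ((contDiff_id.prodMk contDiff_const).contDiffOn) (fun y hy => hy)
  have hφs : ContDiffOn ℝ (⊤ : ℕ∞) (fun y => Φ y t) sx :=
    hΦ.comp ((contDiff_id.prodMk contDiff_const).contDiffOn) (fun y hy => hy)
  have hgs : ∀ y ∈ sx, u y t = (R y t : ℝ) * Complex.exp (Complex.I * Φ y t) :=
    fun y hy => hpolar (y, t) hy
  -- time slice
  set st : Set ℝ := {τ | (x, τ) ∈ U} with hst
  have hsto : IsOpen st := hU.preimage (by fun_prop : Continuous fun τ : ℝ => (x, τ))
  have hts : t ∈ st := hp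
  have hrt : ContDiffOn ℝ (⊤ : ℕ∞) (fun τ => R x τ) st :=
    hR.comp ((contDiff_const.prodMk contDiff_id).contDiffOn) (fun τ hτ => hτ)
  have hφt : ContDiffOn ℝ (⊤ : ℕ∞) (fun τ => Φ x τ) st :=
    hΦ.comp ((contDiff_const.prodMk contDiff_id).contDiffOn) (fun τ hτ => hτ)
  have hwt : ∀ τ ∈ st, u x τ = (R x τ : ℝ) * Complex.exp (Complex.I * Φ x τ) :=
    fun τ hτ => hpolar (x, τ) hτ
  -- abbreviations
  set ρ0 : ℝ := R x t with hρ0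
  set ρ' : ℝ := deriv (fun τ => R x τ) t with hρ'
  set ψ' : ℝ := deriv (fun τ => Φ x τ) t with hψ'
  set Δr : ℝ := lapR (fun y => R y t) x with hΔr
  set Δφ : ℝ := lapR (fun y => Φ y t) x with hΔφ
  set S : ℝ := ∑ j : Fin n, (fderiv ℝ (fun y => Φ y t) x (Pi.single j 1)) ^ 2 with hS
  set C : ℝ := ∑ j : Fin n, fderiv ℝ (fun y => R y t) x (Pi.single j 1)
      * fderiv ℝ (fun y => Φ y t) x (Pi.single j 1) with hC
  -- compute Laplacian of u slice
  have hlap : lapC (fun y => u y t) x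
      = ((Δr : ℂ) + Complex.I * (2 * C + ρ0 * Δφ) - ρ0 * S)
          * Complex.exp (Complex.I * Φ x t) := by
    rw [lapC]
    have hsum : ∀ j : Fin n,
        fderiv ℝ (fun y => fderiv ℝ (fun y => u y t) y (Pi.single j 1)) x (Pi.single j 1)
        = ((fderiv ℝ (fun y => fderiv ℝ (fun y => R y t) y (Pi.single j 1)) x (Pi.single j 1) : ℝ)
            + Complex.I * (2 * fderiv ℝ (fun y => R y t) x (Pi.single j 1)
                * fderiv ℝ (fun y => Φ y t) x (Pi.single j 1)
              + (R x t)
                * fderiv ℝ (fun y => fderiv ℝ (fun y => Φ y t) y (Pi.single j 1)) x (Pi.single j 1))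
            - (R x t) * (fderiv ℝ (fun y => Φ y t) x (Pi.single j 1)) ^ 2)
          * Complex.exp (Complex.I * Φ x t) :=
      fun j => lap_polar_summand hsxo hrs hφs hgs hxs (Pi.single j 1)
    rw [Finset.sum_congr rfl (fun j _ => hsum j), ← Finset.sum_mul]
    congr 1
    rw [hΔr, hΔφ, hS, hC, lapR, lapR]
    have step : ∀ (a b dr dφ : Fin n → ℝ),
        (∑ j : Fin n, (((a j : ℝ) : ℂ)
            + Complex.I * (2 * dr j * dφ j + (R x t) * b j)
            - (R x t) * (dφ j) ^ 2))
        = (∑ j : Fin n, ((a j : ℝ) : ℂ))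
            + (Complex.I * 2) * (∑ j : Fin n, (((dr j : ℝ) : ℂ) * ((dφ j : ℝ) : ℂ)))
            + (Complex.I * ((R x t : ℝ) : ℂ)) * (∑ j : Fin n, ((b j : ℝ) : ℂ))
            - ((R x t : ℝ) : ℂ) * (∑ j : Fin n, (((dφ j : ℝ) : ℂ)) ^ 2) := by
      intro a b dr dφ
      rw [Finset.mul_sum, Finset.mul_sum, Finset.mul_sum, ← Finset.sum_add_distrib,
        ← Finset.sum_add_distrib, ← Finset.sum_sub_distrib]
      refine Finset.sum_congr rfl fun j _ => by ring
    rw [step (fun j => fderiv ℝ (fun y => fderiv ℝ (fun y => R y t) y (Pi.single j 1)) x (Pi.single j 1))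
        (fun j => fderiv ℝ (fun y => fderiv ℝ (fun y => Φ y t) y (Pi.single j 1)) x (Pi.single j 1))
        (fun j => fderiv ℝ (fun y => R y t) x (Pi.single j 1))
        (fun j => fderiv ℝ (fun y => Φ y t) x (Pi.single j 1))]
    push_cast
    ring
  -- compute time derivative
  have hder : deriv (u x) t
      = ((ρ' : ℂ) + Complex.I * ρ0 * ψ') * Complex.exp (Complex.I * Φ x t) :=
    deriv_polar hsto hrt hφt hwt hts
  -- plug into the Schrödinger equation
  have key := heq (x, t) hp
  simp only at key
  rw [hder, hlap, hpolar (x, t) hp] at key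
  have hfac : ((Complex.I * h * ((ρ' : ℂ) + Complex.I * ρ0 * ψ')
      + (h ^ 2 / (2 * m)) * ((Δr : ℂ) + Complex.I * (2 * C + ρ0 * Δφ) - ρ0 * S)
      - e * V x t * ρ0) : ℂ) * Complex.exp (Complex.I * Φ x t) = 0 := by
    rw [← key]; ring
  have hE : Complex.exp (Complex.I * (Φ x t : ℝ)) ≠ 0 := Complex.exp_ne_zero _
  have hbr := (mul_eq_zero.mp hfac).resolve_right hE
  have hre : -(h * ρ0 * ψ') + (h ^ 2 / (2 * m)) * (Δr - ρ0 * S) - e * V x t * ρ0 = 0 := by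
    set a : ℝ := -(h * ρ0 * ψ') + (h ^ 2 / (2 * m)) * (Δr - ρ0 * S) - e * V x t * ρ0 with ha
    set b : ℝ := h * ρ' + (h ^ 2 / (2 * m)) * (2 * C + ρ0 * Δφ) with hb
    have : ((a : ℝ) : ℂ) + ((b : ℝ) : ℂ) * Complex.I = 0 := by
      rw [← hbr, ha, hb]; push_cast; ring_nf; rw [Complex.I_sq]; ring
    have h2 := congrArg Complex.re this
    simpa using h2
  show h * ψ' * ρ0 = (h ^ 2 / (2 * m)) * (Δr - ρ0 * S) - e * V x t * ρ0
  linarith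


/-- polar decomposition argument. If `u₁, u₂` solve the Schrödinger
equation with the same real potential `V`, have equal positive moduli
`uⱼ = R e^{iΦⱼ}`, and agree (together with their phases) on the initial slice
`t = t₀`, then the phases satisfy the same first-order PDE with the same initial
data; assuming uniqueness for this Cauchy problem, `Φ₁ = Φ₂` and `u₁ = u₂` on `U`. -/
theorem polar_decomposition_phase_uniqueness
    {n : ℕ} (h e m t₀ : ℝ) (hh : 0 < h) (he : 0 < e) (hm : 0 < m)
    (U : Set ((Fin n → ℝ) × ℝ)) (hU : IsOpen U) (hUconn : IsConnected U)
    (u₁ u₂ : (Fin n → ℝ) → ℝ → ℂ)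
    (V : (Fin n → ℝ) → ℝ → ℝ)
    (R Φ₁ Φ₂ : (Fin n → ℝ) → ℝ → ℝ)
    (hu₁ : ContDiffOn ℝ (⊤ : ℕ∞) (fun p : (Fin n → ℝ) × ℝ => u₁ p.1 p.2) U)
    (hu₂ : ContDiffOn ℝ (⊤ : ℕ∞) (fun p : (Fin n → ℝ) × ℝ => u₂ p.1 p.2) U)
    (hR : ContDiffOn ℝ (⊤ : ℕ∞) (fun p : (Fin n → ℝ) × ℝ => R p.1 p.2) U)
    (hΦ₁ : ContDiffOn ℝ (⊤ : ℕ∞) (fun p : (Fin n → ℝ) × ℝ => Φ₁ p.1 p.2) U)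
    (hΦ₂ : ContDiffOn ℝ (⊤ : ℕ∞) (fun p : (Fin n → ℝ) × ℝ => Φ₂ p.1 p.2) U)
    (heq₁ : ∀ p ∈ U,
      Complex.I * h * deriv (u₁ p.1) p.2
        + (h ^ 2 / (2 * m)) * lapC (fun y => u₁ y p.2) p.1
        - e * V p.1 p.2 * u₁ p.1 p.2 = 0)
    (heq₂ : ∀ p ∈ U,
      Complex.I * h * deriv (u₂ p.1) p.2
        + (h ^ 2 / (2 * m)) * lapC (fun y => u₂ y p.2) p.1
        - e * V p.1 p.2 * u₂ p.1 p.2 = 0)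
    (hpolar₁ : ∀ p ∈ U, u₁ p.1 p.2 = R p.1 p.2 * Complex.exp (Complex.I * Φ₁ p.1 p.2))
    (hpolar₂ : ∀ p ∈ U, u₂ p.1 p.2 = R p.1 p.2 * Complex.exp (Complex.I * Φ₂ p.1 p.2))
    (hRpos : ∀ p ∈ U, 0 < R p.1 p.2)
    (hmod : ∀ p ∈ U, ‖u₁ p.1 p.2‖ = ‖u₂ p.1 p.2‖)
    (hinit : ∀ x : Fin n → ℝ, (x, t₀) ∈ U → u₁ x t₀ = u₂ x t₀ ∧ Φ₁ x t₀ = Φ₂ x t₀)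
    (huniq : ∀ Ψ₁ Ψ₂ : (Fin n → ℝ) → ℝ → ℝ,
      ContDiffOn ℝ (⊤ : ℕ∞) (fun p : (Fin n → ℝ) × ℝ => Ψ₁ p.1 p.2) U →
      ContDiffOn ℝ (⊤ : ℕ∞) (fun p : (Fin n → ℝ) × ℝ => Ψ₂ p.1 p.2) U →
      (∀ p ∈ U, phasePDE h e m V R Ψ₁ p) →
      (∀ p ∈ U, phasePDE h e m V R Ψ₂ p) →
      (∀ x : Fin n → ℝ, (x, t₀) ∈ U → Ψ₁ x t₀ = Ψ₂ x t₀) →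
      ∀ p ∈ U, Ψ₁ p.1 p.2 = Ψ₂ p.1 p.2) :
    (∀ p ∈ U, phasePDE h e m V R Φ₁ p) ∧
    (∀ p ∈ U, phasePDE h e m V R Φ₂ p) ∧
    (∀ p ∈ U, Φ₁ p.1 p.2 = Φ₂ p.1 p.2) ∧
    (∀ p ∈ U, u₁ p.1 p.2 = u₂ p.1 p.2) := by
  refine ⟨fun p hp => phase_of_schrodinger h e m U hU u₁ V R Φ₁ hR hΦ₁ heq₁ hpolar₁ hp,
    fun p hp => phase_of_schrodinger h e m U hU u₂ V R Φ₂ hR hΦ₂ heq₂ hpolar₂ hp,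
    huniq Φ₁ Φ₂ hΦ₁ hΦ₂
      (fun p hp => phase_of_schrodinger h e m U hU u₁ V R Φ₁ hR hΦ₁ heq₁ hpolar₁ hp)
      (fun p hp => phase_of_schrodinger h e m U hU u₂ V R Φ₂ hR hΦ₂ heq₂ hpolar₂ hp)
      (fun x hx => (hinit x hx).2),
    fun p hp => ?_⟩
  rw [hpolar₁ p hp, hpolar₂ p hp,
    huniq Φ₁ Φ₂ hΦ₁ hΦ₂
      (fun p hp => phase_of_schrodinger h e m U hU u₁ V R Φ₁ hR hΦ₁ heq₁ hpolar₁ hp)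
      (fun p hp => phase_of_schrodinger h e m U hU u₂ V R Φ₂ hR hΦ₂ heq₂ hpolar₂ hp)
      (fun x hx => (hinit x hx).2) p hp]
end

section
/- Let (A,V) and (A',V') be smooth electromagnetic potentials on an open set D ⊂ ℝⁿ × (0,T), and suppose there exists a smooth g : D → ℂ with |g| = 1 such that (e/c)A' = (e/c)A + ihg⁻¹∇ₓg and eV' = eV − ihg⁻¹∂g/∂t. Then for every closed curve γ in D, ∮_γ ((e/(hc))A'·dx − (e/h)V'dt) − ∮_γ ((e/(hc))A·dx − (e/h)V dt) ∈ 2πℤ. -/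
open Set intervalIntegral Real

/-- The electromagnetic flux `∮_γ ((e/(hc))A·dx − (e/h)V dt)` along a space-time
curve `γ : [0,1] → ℝⁿ × ℝ`. -/
noncomputable def emFlux {n : ℕ} (e h c : ℝ)
    (A : (Fin n → ℝ) × ℝ → Fin n → ℝ) (V : (Fin n → ℝ) × ℝ → ℝ)
    (γ : ℝ → (Fin n → ℝ) × ℝ) : ℝ :=
  ∫ t in (0 : ℝ)..1,
    (e / (h * c)) * ∑ j, A (γ t) j * (deriv γ t).1 j
      - (e / h) * V (γ t) * (deriv γ t).2

/-- gauge equivalent time-dependent electromagnetic potentials have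
fluxes over every closed curve in `D` differing by an integer multiple of `2π`. -/
theorem gauge_equivalent_fluxes_differ_by_two_pi_int
    {n : ℕ} (e h c T : ℝ) (he : 0 < e) (hh : 0 < h) (hc : 0 < c) (hT : 0 < T)
    (D : Set ((Fin n → ℝ) × ℝ)) (hD : IsOpen D)
    (hDsub : ∀ p ∈ D, p.2 ∈ Ioo (0 : ℝ) T)
    (A A' : (Fin n → ℝ) × ℝ → Fin n → ℝ) (V V' : (Fin n → ℝ) × ℝ → ℝ)
    (hA : ∀ j, ContDiffOn ℝ (⊤ : ℕ∞) (fun p => A p j) D)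
    (hA' : ∀ j, ContDiffOn ℝ (⊤ : ℕ∞) (fun p => A' p j) D)
    (hV : ContDiffOn ℝ (⊤ : ℕ∞) V D) (hV' : ContDiffOn ℝ (⊤ : ℕ∞) V' D)
    (g : (Fin n → ℝ) × ℝ → ℂ)
    (hg : ContDiffOn ℝ (⊤ : ℕ∞) g D)
    (hg1 : ∀ p ∈ D, ‖g p‖ = 1)
    (hgaugeA : ∀ p ∈ D, ∀ j : Fin n,
      ((e / c * A' p j : ℝ) : ℂ)
        = (e / c * A p j : ℝ)
          + Complex.I * h * (g p)⁻¹ *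
              fderiv ℝ g p ((Pi.single j 1 : Fin n → ℝ), (0 : ℝ)))
    (hgaugeV : ∀ p ∈ D,
      ((e * V' p : ℝ) : ℂ)
        = (e * V p : ℝ)
          - Complex.I * h * (g p)⁻¹ * fderiv ℝ g p ((0 : Fin n → ℝ), (1 : ℝ))) :
    ∀ γ : ℝ → (Fin n → ℝ) × ℝ,
      ContDiff ℝ 1 γ → γ 0 = γ 1 → (∀ t ∈ Icc (0 : ℝ) 1, γ t ∈ D) →
      ∃ m : ℤ, emFlux e h c A' V' γ - emFlux e h c A V γ = 2 * π * m := by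
  intro γ hγ hγ01 hγD
  have hne : (h : ℝ) ≠ 0 := hh.ne'
  have hcne : (c : ℝ) ≠ 0 := hc.ne'
  set U : Set ℝ := γ ⁻¹' D with hUdef
  have hUopen : IsOpen U := hD.preimage hγ.continuous
  have hIU : Icc (0 : ℝ) 1 ⊆ U := hγD
  set f : ℝ → ℂ := fun t => g (γ t) with hfdef
  -- f is nonvanishing on U
  have hf1 : ∀ t ∈ U, f t ≠ 0 := by
    intro t ht h0
    have := hg1 (γ t) ht
    rw [hfdef] at h0
    simp only [h0] at this
    simp at this
  -- derivative of f
  have hgd : ∀ p ∈ D, DifferentiableAt ℝ g p := fun p hp =>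
    (hg.contDiffAt (hD.mem_nhds hp)).differentiableAt (by simp)
  have hγd : ∀ t : ℝ, HasDerivAt γ (deriv γ t) t := fun t =>
    ((hγ.differentiable one_ne_zero) t).hasDerivAt
  have hfderiv : ∀ t ∈ U, HasDerivAt f (fderiv ℝ g (γ t) (deriv γ t)) t := by
    intro t ht
    exact ((hgd _ ht).hasFDerivAt).comp_hasDerivAt t (hγd t)
  -- the real-valued gauge term
  set w : ℝ → ℝ := fun t =>
    (e / (h * c)) * ∑ j, (A' (γ t) j - A (γ t) j) * (deriv γ t).1 j
      - (e / h) * (V' (γ t) - V (γ t)) * (deriv γ t).2 with hwdef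
  -- pointwise identities from the gauge conditions
  have hAj : ∀ t ∈ U, ∀ j : Fin n,
      Complex.I * (f t)⁻¹ * fderiv ℝ g (γ t) ((Pi.single j 1 : Fin n → ℝ), (0 : ℝ))
        = ((e / (h * c)) * (A' (γ t) j - A (γ t) j) : ℝ) := by
    intro t ht j
    have hI := hgaugeA (γ t) ht j
    have hh' : (h : ℂ) ≠ 0 := by exact_mod_cast hne
    have hc' : (c : ℂ) ≠ 0 := by exact_mod_cast hcne
    simp only [hfdef]
    have h2 : Complex.I * ↑h * (g (γ t))⁻¹ * fderiv ℝ g (γ t) ((Pi.single j 1 : Fin n → ℝ), (0:ℝ))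
        = ((e / c * A' (γ t) j : ℝ) : ℂ) - ((e / c * A (γ t) j : ℝ) : ℂ) := by
      linear_combination -hI
    have h3 : Complex.I * (g (γ t))⁻¹ * fderiv ℝ g (γ t) ((Pi.single j 1 : Fin n → ℝ), (0:ℝ))
        = (Complex.I * ↑h * (g (γ t))⁻¹ * fderiv ℝ g (γ t) ((Pi.single j 1 : Fin n → ℝ), (0:ℝ))) / h := by
      rw [eq_div_iff hh']; ring
    rw [h3, h2]
    push_cast
    field_simp
  have hVt : ∀ t ∈ U,
      Complex.I * (f t)⁻¹ * fderiv ℝ g (γ t) ((0 : Fin n → ℝ), (1 : ℝ))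
        = -(((e / h) * (V' (γ t) - V (γ t)) : ℝ) : ℂ) := by
    intro t ht
    have hI := hgaugeV (γ t) ht
    have hh' : (h : ℂ) ≠ 0 := by exact_mod_cast hne
    simp only [hfdef]
    have h2 : Complex.I * ↑h * (g (γ t))⁻¹ * fderiv ℝ g (γ t) ((0 : Fin n → ℝ), (1:ℝ))
        = ((e * V (γ t) : ℝ) : ℂ) - ((e * V' (γ t) : ℝ) : ℂ) := by
      linear_combination hI
    have h3 : Complex.I * (g (γ t))⁻¹ * fderiv ℝ g (γ t) ((0 : Fin n → ℝ), (1:ℝ))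
        = (Complex.I * ↑h * (g (γ t))⁻¹ * fderiv ℝ g (γ t) ((0 : Fin n → ℝ), (1:ℝ))) / h := by
      rw [eq_div_iff hh']; ring
    rw [h3, h2]
    push_cast
    field_simp
    ring
  -- key identity : w = i f⁻¹ f'
  have key : ∀ t ∈ U,
      (w t : ℂ) = Complex.I * (f t)⁻¹ * fderiv ℝ g (γ t) (deriv γ t) := by
    intro t ht
    set L := fderiv ℝ g (γ t) with hL
    set d := deriv γ t with hd
    have hdecomp : d = (∑ j, ((deriv γ t).1 j • ((Pi.single j 1 : Fin n → ℝ), (0 : ℝ))))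
        + (deriv γ t).2 • ((0 : Fin n → ℝ), (1 : ℝ)) := by
      apply Prod.ext
      · have h1 : ∀ j : Fin n, ((deriv γ t).1 j • ((Pi.single j 1 : Fin n → ℝ), (0 : ℝ)))
            = ((Pi.single j ((deriv γ t).1 j) : Fin n → ℝ), (0:ℝ)) := by
          intro j
          rw [Prod.smul_mk]
          congr 1
          · ext k
            by_cases hk : k = j
            · subst hk; simp
            · simp [Pi.single_eq_of_ne hk]
          · simp
        rw [Finset.sum_congr rfl (fun j _ => h1 j)]
        simp only [Prod.fst_add, Prod.fst_sum, Prod.smul_fst, smul_zero, Prod.smul_mk]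
        rw [Finset.univ_sum_single ((deriv γ t).1)]
        simp [← hd]
      · simp [Prod.snd_sum, ← hd]
    have hLd : L d = ∑ j, (((deriv γ t).1 j : ℂ) * L ((Pi.single j 1 : Fin n → ℝ), (0 : ℝ)))
        + ((deriv γ t).2 : ℂ) * L ((0 : Fin n → ℝ), (1 : ℝ)) := by
      conv_lhs => rw [hdecomp]
      rw [map_add, map_sum]
      congr 1
      · exact Finset.sum_congr rfl fun j _ => by rw [map_smul, Complex.real_smul]
      · rw [map_smul, Complex.real_smul]
    rw [hLd, mul_add, Finset.mul_sum]
    have hterm : ∀ j : Fin n, Complex.I * (f t)⁻¹ *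
        (((deriv γ t).1 j : ℂ) * L ((Pi.single j 1 : Fin n → ℝ), (0 : ℝ)))
        = ((deriv γ t).1 j : ℂ) * (((e / (h * c)) * (A' (γ t) j - A (γ t) j) : ℝ) : ℂ) := by
      intro j
      rw [show Complex.I * (f t)⁻¹ * (((deriv γ t).1 j : ℂ) * L ((Pi.single j 1 : Fin n → ℝ), (0 : ℝ)))
          = ((deriv γ t).1 j : ℂ) * (Complex.I * (f t)⁻¹ * L ((Pi.single j 1 : Fin n → ℝ), (0 : ℝ))) by ring]
      rw [hAj t ht j]
    rw [Finset.sum_congr rfl (fun j _ => hterm j)]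
    rw [show Complex.I * (f t)⁻¹ * (((deriv γ t).2 : ℂ) * L ((0 : Fin n → ℝ), (1 : ℝ)))
        = ((deriv γ t).2 : ℂ) * (Complex.I * (f t)⁻¹ * L ((0 : Fin n → ℝ), (1 : ℝ))) by ring]
    rw [hVt t ht]
    have hsum : (∑ j, ((deriv γ t).1 j : ℂ) * (((e / (h * c)) * (A' (γ t) j - A (γ t) j) : ℝ) : ℂ))
        = ((e / (h * c) * ∑ j, (A' (γ t) j - A (γ t) j) * (deriv γ t).1 j : ℝ) : ℂ) := by
      push_cast
      rw [Finset.mul_sum]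
      exact Finset.sum_congr rfl fun j _ => by ring
    rw [hsum, hwdef]
    push_cast
    ring
  -- hence f' = -(i w) f
  have hfd' : ∀ t ∈ U, HasDerivAt f (-(Complex.I * w t) * f t) t := by
    intro t ht
    have h1 := hfderiv t ht
    have h2 := key t ht
    have h0 := hf1 t ht
    have h3 : -(Complex.I * (w t : ℂ)) * f t = fderiv ℝ g (γ t) (deriv γ t) := by
      rw [h2]
      field_simp
      ring_nf
      rw [Complex.I_sq]
      ring
    rw [h3]
    exact h1
  -- continuity of w on U
  have hdc : Continuous (deriv γ) := hγ.continuous_deriv le_rfl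
  have hmaps : MapsTo γ U D := fun t ht => ht
  have hwcont : ContinuousOn w U := by
    apply ContinuousOn.sub
    · apply ContinuousOn.mul continuousOn_const
      apply continuousOn_finset_sum
      intro j _
      exact (((hA' j).continuousOn.sub (hA j).continuousOn).comp
          hγ.continuous.continuousOn hmaps).mul
        (((continuous_apply j).comp (continuous_fst.comp hdc)).continuousOn)
    · exact (ContinuousOn.mul continuousOn_const
        ((hV'.continuousOn.sub hV.continuousOn).comp hγ.continuous.continuousOn hmaps)).mul
        ((continuous_snd.comp hdc).continuousOn)
  -- primitive of w
  set θ : ℝ → ℝ := fun t => ∫ s in (0:ℝ)..t, w s with hθdef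
  have hθd : ∀ t ∈ Icc (0:ℝ) 1, HasDerivAt θ (w t) t := by
    intro t ht
    apply intervalIntegral.integral_hasDerivAt_right
    · apply (hwcont.mono ?_).intervalIntegrable
      intro s hs
      apply hIU
      rw [uIcc_of_le ht.1] at hs
      exact ⟨hs.1, le_trans hs.2 ht.2⟩
    · exact hwcont.stronglyMeasurableAtFilter hUopen t (hIU ht)
    · exact hwcont.continuousAt (hUopen.mem_nhds (hIU ht))
  -- u = f * exp(iθ) has zero derivative on [0,1]
  set u : ℝ → ℂ := fun t => f t * Complex.exp (Complex.I * θ t) with hudef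
  have hud : ∀ t ∈ Icc (0:ℝ) 1, HasDerivAt u 0 t := by
    intro t ht
    have h1 := hfd' t (hIU ht)
    have h2 : HasDerivAt (fun s => Complex.I * (θ s : ℂ)) (Complex.I * w t) t :=
      ((hθd t ht).ofReal_comp).const_mul Complex.I
    have h3 := h2.cexp
    have h4 := h1.mul h3
    convert h4 using 1
    · rfl
    · rfl
    · ring
  have hconst := constant_of_has_deriv_right_zero
    (fun t ht => (hud t ht).continuousAt.continuousWithinAt)
    (fun t ht => ((hud t ⟨ht.1, le_of_lt ht.2⟩)).hasDerivWithinAt)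
  have hu10 : u 1 = u 0 := hconst 1 (by norm_num)
  have hθ0 : θ 0 = 0 := by rw [hθdef]; simp
  have hf01 : f 1 = f 0 := by simp only [hfdef]; rw [← hγ01]
  have hexp1 : Complex.exp (Complex.I * θ 1) = 1 := by
    have h0 : f 0 ≠ 0 := hf1 0 (hIU (by norm_num))
    rw [hudef] at hu10
    simp only [hθ0, Complex.ofReal_zero, mul_zero, Complex.exp_zero, mul_one, hf01] at hu10
    exact mul_left_cancel₀ h0 (hu10.trans (mul_one (f 0)).symm)
  obtain ⟨m, hm⟩ := Complex.exp_eq_one_iff.1 hexp1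
  have hθ1 : θ 1 = 2 * π * m := by
    have : (θ 1 : ℂ) = (2 * π * m : ℝ) := by
      have hI : (Complex.I : ℂ) ≠ 0 := Complex.I_ne_zero
      apply mul_left_cancel₀ hI
      rw [hm]
      push_cast
      ring
    exact_mod_cast this
  refine ⟨m, ?_⟩
  rw [← hθ1, hθdef]
  -- flux difference equals ∫ w
  have hcontsub : ∀ (B : (Fin n → ℝ) × ℝ → Fin n → ℝ) (W : (Fin n → ℝ) × ℝ → ℝ),
      (∀ j, ContDiffOn ℝ (⊤ : ℕ∞) (fun p => B p j) D) → ContDiffOn ℝ (⊤ : ℕ∞) W D →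
      ContinuousOn (fun t => (e / (h * c)) * ∑ j, B (γ t) j * (deriv γ t).1 j
        - (e / h) * W (γ t) * (deriv γ t).2) U := by
    intro B W hB hW
    apply ContinuousOn.sub
    · apply ContinuousOn.mul continuousOn_const
      apply continuousOn_finset_sum
      intro j _
      exact ((hB j).continuousOn.comp hγ.continuous.continuousOn hmaps).mul
        (((continuous_apply j).comp (continuous_fst.comp hdc)).continuousOn)
    · exact (ContinuousOn.mul continuousOn_const
        (hW.continuousOn.comp hγ.continuous.continuousOn hmaps)).mul
        ((continuous_snd.comp hdc).continuousOn)
  have hint1 : IntervalIntegrable (fun t => (e / (h * c)) * ∑ j, A' (γ t) j * (deriv γ t).1 j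
      - (e / h) * V' (γ t) * (deriv γ t).2) MeasureTheory.volume 0 1 := by
    apply ((hcontsub A' V' hA' hV').mono ?_).intervalIntegrable
    rw [uIcc_of_le zero_le_one]; exact hIU
  have hint2 : IntervalIntegrable (fun t => (e / (h * c)) * ∑ j, A (γ t) j * (deriv γ t).1 j
      - (e / h) * V (γ t) * (deriv γ t).2) MeasureTheory.volume 0 1 := by
    apply ((hcontsub A V hA hV).mono ?_).intervalIntegrable
    rw [uIcc_of_le zero_le_one]; exact hIU
  rw [emFlux, emFlux, ← intervalIntegral.integral_sub hint1 hint2]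
  apply intervalIntegral.integral_congr
  intro t ht
  rw [hwdef]
  simp only [Finset.mul_sum, mul_sub, sub_mul, Finset.sum_sub_distrib]
  ring
end

section
/- Let g = Σ_{j,k=0}^n g_{jk}(x) dx_j dx_k and g' = Σ_{j,k=0}^n g'_{jk}(x') dx'_j dx'_k be stationary pseudo-Riemannian metrics (coefficients independent of the time variable x₀) related by the isometry x' = φ(x), x'₀ = x₀ + a(x), where φ : Ω → Ω' is a diffeomorphism and a is smooth. Then g'₀₀(φ(x)) = g₀₀(x) for all x ∈ Ω, and for every closed curve γ ⊂ Ω with image γ' = φ(γ), ∮_{γ'} Σⱼ (g'_{j0}(x')/g'₀₀(x')) dx'_j = ∮_γ Σⱼ (g_{j0}(x)/g₀₀(x)) dx_j. -/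
open Set intervalIntegral

/-- if two stationary metrics `g`, `g'` are isometric via
`x' = φ(x)`, `x₀' = x₀ + a(x)`, then `g'₀₀(φ(x)) = g₀₀(x)` and the gravitational
flux `∮_γ Σⱼ (g_{j0}/g₀₀) dxⱼ` is preserved: for every closed curve `γ` in `Ω`,
the flux of `g'` along `φ ∘ γ` equals the flux of `g` along `γ`. -/
theorem stationary_isometry_preserves_gravitational_flux
    {n : ℕ} (Ω Ω' : Set (Fin n → ℝ)) (hΩ : IsOpen Ω) (hΩ' : IsOpen Ω')
    (G G' : (Fin n → ℝ) → Fin (n + 1) → Fin (n + 1) → ℝ)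
    (hGsymm : ∀ x ∈ Ω, ∀ j k, G x j k = G x k j)
    (hG'symm : ∀ x' ∈ Ω', ∀ j k, G' x' j k = G' x' k j)
    (hG00 : ∀ x ∈ Ω, 0 < G x 0 0)
    (hG'00 : ∀ x' ∈ Ω', 0 < G' x' 0 0)
    (hGsmooth : ∀ j k, ContDiffOn ℝ (⊤ : ℕ∞) (fun x => G x j k) Ω)
    (hG'smooth : ∀ j k, ContDiffOn ℝ (⊤ : ℕ∞) (fun x => G' x j k) Ω')
    (φ : (Fin n → ℝ) → Fin n → ℝ) (a : (Fin n → ℝ) → ℝ)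
    (hφ : ContDiffOn ℝ (⊤ : ℕ∞) φ Ω) (ha : ContDiffOn ℝ (⊤ : ℕ∞) a Ω)
    (hmaps : MapsTo φ Ω Ω')
    (hisom : ∀ x ∈ Ω, ∀ v w : Fin (n + 1) → ℝ,
      (∑ j : Fin (n + 1), ∑ k : Fin (n + 1),
        G' (φ x) j k
          * ((Fin.cons (v 0 + fderiv ℝ a x (fun i : Fin n => v i.succ))
              (fun i : Fin n => fderiv ℝ φ x (fun i' : Fin n => v i'.succ) i) :
                Fin (n + 1) → ℝ) j)
          * ((Fin.cons (w 0 + fderiv ℝ a x (fun i : Fin n => w i.succ))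
              (fun i : Fin n => fderiv ℝ φ x (fun i' : Fin n => w i'.succ) i) :
                Fin (n + 1) → ℝ) k))
        = ∑ j : Fin (n + 1), ∑ k : Fin (n + 1), G x j k * v j * w k) :
    (∀ x ∈ Ω, G' (φ x) 0 0 = G x 0 0) ∧
    (∀ γ : ℝ → Fin n → ℝ,
      ContDiff ℝ 1 γ → γ 0 = γ 1 → (∀ t ∈ Icc (0 : ℝ) 1, γ t ∈ Ω) →
      (∫ t in (0 : ℝ)..1,
          ∑ j : Fin n,
            (G' (φ (γ t)) j.succ 0 / G' (φ (γ t)) 0 0)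
              * deriv (fun s => φ (γ s)) t j)
        = ∫ t in (0 : ℝ)..1,
            ∑ j : Fin n, (G (γ t) j.succ 0 / G (γ t) 0 0) * deriv γ t j) := by
  have h00 : ∀ x ∈ Ω, G' (φ x) 0 0 = G x 0 0 := by
    intro x hx
    have h := hisom x hx (Fin.cons 1 0) (Fin.cons 1 0)
    have hz : (fun i : Fin n => (Fin.cons 1 0 : Fin (n + 1) → ℝ) i.succ) = 0 := by
      funext i; simp
    rw [hz] at h
    simpa [Fin.sum_univ_succ, Fin.cons_zero, Fin.cons_succ] using h
  have hcross : ∀ x ∈ Ω, ∀ u : Fin n → ℝ,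
      ∑ j : Fin n, (G' (φ x) j.succ 0 / G' (φ x) 0 0) * fderiv ℝ φ x u j
        = (∑ j : Fin n, (G x j.succ 0 / G x 0 0) * u j) - fderiv ℝ a x u := by
    intro x hx u
    have h := hisom x hx (Fin.cons 1 0) (Fin.cons 0 u)
    have hz : (fun i : Fin n => (Fin.cons 1 0 : Fin (n + 1) → ℝ) i.succ) = 0 := by
      funext i; simp
    have hu : (fun i : Fin n => (Fin.cons 0 u : Fin (n + 1) → ℝ) i.succ) = u := by
      funext i; simp
    rw [hz, hu] at h
    simp only [Fin.sum_univ_succ, Fin.cons_zero, Fin.cons_succ, map_zero,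
      Pi.zero_apply, mul_zero, zero_mul, mul_one, mul_zero, add_zero, zero_add,
      Finset.sum_const_zero, one_mul] at h
    -- h : G' (φ x) 0 0 * (0 + fderiv a x u) + Σ_j G' (φ x) 0 j.succ * fderiv φ x u j
    --      = Σ_j G x 0 j.succ * u j  (roughly)
    have hc : G x 0 0 ≠ 0 := (hG00 x hx).ne'
    have hφx : φ x ∈ Ω' := hmaps hx
    have hsy : ∀ j : Fin n, G' (φ x) j.succ 0 = G' (φ x) 0 j.succ := fun j =>
      hG'symm (φ x) hφx j.succ 0
    have hsy' : ∀ j : Fin n, G x j.succ 0 = G x 0 j.succ := fun j =>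
      hGsymm x hx j.succ 0
    rw [h00 x hx] at h
    calc ∑ j : Fin n, (G' (φ x) j.succ 0 / G' (φ x) 0 0) * fderiv ℝ φ x u j
        = (∑ j : Fin n, G' (φ x) 0 j.succ * fderiv ℝ φ x u j) / G x 0 0 := by
          rw [Finset.sum_div]
          refine Finset.sum_congr rfl fun j _ => ?_
          rw [hsy j, h00 x hx]; ring
      _ = (∑ j : Fin n, (G x j.succ 0 / G x 0 0) * u j) - fderiv ℝ a x u := by
          rw [div_eq_iff hc]
          have : ∑ j : Fin n, (G x j.succ 0 / G x 0 0) * u j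
              = (∑ j : Fin n, G x 0 j.succ * u j) / G x 0 0 := by
            rw [Finset.sum_div]
            refine Finset.sum_congr rfl fun j _ => ?_
            rw [hsy' j]; ring
          rw [this]
          field_simp
          linarith [h]
  refine ⟨h00, ?_⟩
  intro γ hγ hγcl hγΩ
  have hγd : Differentiable ℝ γ := hγ.differentiable one_ne_zero
  have hγc : Continuous γ := hγ.continuous
  have hγd' : Continuous (deriv γ) := hγ.continuous_deriv le_rfl
  have hmapsI : MapsTo γ (Icc (0 : ℝ) 1) Ω := hγΩ
  set A : ℝ → ℝ := fun t => fderiv ℝ a (γ t) (deriv γ t) with hA_def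
  have key : ∀ t ∈ Icc (0 : ℝ) 1,
      (∑ j : Fin n, (G' (φ (γ t)) j.succ 0 / G' (φ (γ t)) 0 0)
          * deriv (fun s => φ (γ s)) t j)
        = (∑ j : Fin n, (G (γ t) j.succ 0 / G (γ t) 0 0) * deriv γ t j) - A t := by
    intro t ht
    have hx := hγΩ t ht
    have hφd : HasFDerivAt φ (fderiv ℝ φ (γ t)) (γ t) :=
      ((hφ.contDiffAt (hΩ.mem_nhds hx)).differentiableAt (by simp)).hasFDerivAt
    have hcomp : HasDerivAt (fun s => φ (γ s)) (fderiv ℝ φ (γ t) (deriv γ t)) t :=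
      hφd.comp_hasDerivAt t (hγd t).hasDerivAt
    rw [hcomp.deriv]
    exact hcross (γ t) hx (deriv γ t)
  have hIcc : uIcc (0 : ℝ) 1 = Icc 0 1 := uIcc_of_le zero_le_one
  have hfcont : ContinuousOn
      (fun t => ∑ j : Fin n, (G (γ t) j.succ 0 / G (γ t) 0 0) * deriv γ t j)
      (Icc (0 : ℝ) 1) := by
    refine continuousOn_finset_sum _ fun j _ => ?_
    refine ContinuousOn.mul (ContinuousOn.div ?_ ?_ ?_) ?_
    · exact (hGsmooth j.succ 0).continuousOn.comp hγc.continuousOn hmapsI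
    · exact (hGsmooth 0 0).continuousOn.comp hγc.continuousOn hmapsI
    · intro t ht; exact (hG00 (γ t) (hγΩ t ht)).ne'
    · exact (continuous_apply j).comp hγd' |>.continuousOn
  have hfa : ContinuousOn (fderiv ℝ a) Ω := ha.continuousOn_fderiv_of_isOpen hΩ (by simp)
  have hAcont : ContinuousOn A (Icc (0 : ℝ) 1) :=
    (hfa.comp hγc.continuousOn hmapsI).clm_apply hγd'.continuousOn
  have hfint : IntervalIntegrable
      (fun t => ∑ j : Fin n, (G (γ t) j.succ 0 / G (γ t) 0 0) * deriv γ t j)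
      MeasureTheory.volume 0 1 := (hIcc ▸ hfcont).intervalIntegrable
  have hAint : IntervalIntegrable A MeasureTheory.volume 0 1 :=
    (hIcc ▸ hAcont).intervalIntegrable
  have hderivA : ∀ t ∈ uIcc (0 : ℝ) 1, HasDerivAt (fun s => a (γ s)) (A t) t := by
    intro t ht
    have hx := hγΩ t (hIcc ▸ ht)
    have had : HasFDerivAt a (fderiv ℝ a (γ t)) (γ t) :=
      ((ha.contDiffAt (hΩ.mem_nhds hx)).differentiableAt (by simp)).hasFDerivAt
    exact had.comp_hasDerivAt t (hγd t).hasDerivAt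
  have hAzero : ∫ t in (0 : ℝ)..1, A t = 0 := by
    rw [intervalIntegral.integral_eq_sub_of_hasDerivAt hderivA hAint, hγcl, sub_self]
  calc (∫ t in (0 : ℝ)..1,
          ∑ j : Fin n, (G' (φ (γ t)) j.succ 0 / G' (φ (γ t)) 0 0)
            * deriv (fun s => φ (γ s)) t j)
      = ∫ t in (0 : ℝ)..1,
          ((∑ j : Fin n, (G (γ t) j.succ 0 / G (γ t) 0 0) * deriv γ t j) - A t) := by
        refine intervalIntegral.integral_congr fun t ht => ?_
        exact key t (hIcc ▸ ht)
    _ = (∫ t in (0 : ℝ)..1,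
          ∑ j : Fin n, (G (γ t) j.succ 0 / G (γ t) 0 0) * deriv γ t j)
          - ∫ t in (0 : ℝ)..1, A t := intervalIntegral.integral_sub hfint hAint
    _ = _ := by rw [hAzero, sub_zero]
end

section
/- Let g be a stationary metric on Ω ⊂ ℝⁿ that is locally static: each point has a neighborhood V and a smooth a_V : V → ℝ with g_{j0}(x) = g₀₀(x) ∂a_V/∂xⱼ(x) on V for j = 1,…,n. Then the 1-form ω = Σⱼ (g_{j0}(x)/g₀₀(x)) dxⱼ is closed on Ω, and ∮_γ ω = 0 for every closed curve γ contained in such a neighborhood V; moreover ∮_γ ω depends only on the homotopy class of γ in Ω. The metric g is globally isometric to a static metric (one with all g_{j0} ≡ 0) via x'₀ = x₀ + a(x), x' = x, if and only if ω is exact on Ω, i.e., ∮_γ ω = 0 for all closed curves γ in Ω. -/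
open Set intervalIntegral

/-- The gravitational flux `∮_γ Σⱼ (g_{j0}/g₀₀) dxⱼ` of a stationary metric `G`
along a curve `γ : [0,1] → ℝⁿ`. -/
noncomputable def gravFlux {n : ℕ}
    (G : (Fin n → ℝ) → Fin (n + 1) → Fin (n + 1) → ℝ)
    (γ : ℝ → Fin n → ℝ) : ℝ :=
  ∫ t in (0 : ℝ)..1,
    ∑ j : Fin n, (G (γ t) j.succ 0 / G (γ t) 0 0) * deriv γ t j

noncomputable def pflux {n : ℕ} (w : (Fin n → ℝ) → Fin n → ℝ) (γ : ℝ → Fin n → ℝ) (u v : ℝ) : ℝ :=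
  ∫ t in u..v, ∑ j, w (γ t) j * deriv γ t j

theorem clm_expand {n : ℕ} (L : (Fin n → ℝ) →L[ℝ] ℝ) (v : Fin n → ℝ) :
    L v = ∑ j, v j * L (Pi.single j 1) := by
  have hv : v = ∑ j, v j • (Pi.single j 1 : Fin n → ℝ) := by
    funext i; simp [Finset.sum_apply, Pi.single_apply]
  conv_lhs => rw [hv]
  rw [map_sum]; simp [smul_eq_mul]

/-- FTC along a curve inside a set with a primitive. -/
theorem pflux_eq_sub {n : ℕ} {w : (Fin n → ℝ) → Fin n → ℝ} {V : Set (Fin n → ℝ)}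
    (hV : IsOpen V) {aV : (Fin n → ℝ) → ℝ} (haV : ContDiffOn ℝ (⊤ : ℕ∞) aV V)
    (hw : ∀ y ∈ V, ∀ j, w y j = fderiv ℝ aV y (Pi.single j 1))
    {γ : ℝ → Fin n → ℝ} (hγ : ContDiff ℝ 1 γ) {u v : ℝ}
    (hmem : ∀ t ∈ uIcc u v, γ t ∈ V) :
    pflux w γ u v = aV (γ v) - aV (γ u) := by
  have hderiv : ∀ t ∈ uIcc u v,
      HasDerivAt (fun s => aV (γ s)) (∑ j, w (γ t) j * deriv γ t j) t := by
    intro t ht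
    have hγV : γ t ∈ V := hmem t ht
    have haVd : HasFDerivAt aV (fderiv ℝ aV (γ t)) (γ t) :=
      (((haV.contDiffAt (hV.mem_nhds hγV)).differentiableAt (by simp))).hasFDerivAt
    have hγd : HasDerivAt γ (deriv γ t) t :=
      ((hγ.differentiable one_ne_zero) t).hasDerivAt
    have := haVd.comp_hasDerivAt t hγd
    refine this.congr_deriv (Eq.symm ?_)
    rw [clm_expand]
    refine Finset.sum_congr rfl fun j _ => ?_
    rw [hw (γ t) hγV j, mul_comm]
  have hcont : ContinuousOn (fun t => ∑ j, w (γ t) j * deriv γ t j) (uIcc u v) := by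
    refine continuousOn_finset_sum _ fun j _ => ContinuousOn.mul ?_ ?_
    · have h1 : ContinuousOn (fun y => fderiv ℝ aV y (Pi.single j 1)) V := by
        intro y hy
        have : ContDiffAt ℝ 0 (fderiv ℝ aV) y :=
          (haV.contDiffAt (hV.mem_nhds hy)).fderiv_right ((by simp))
        exact ((((ContinuousLinearMap.apply ℝ ℝ ((Pi.single j 1 : Fin n → ℝ))).continuous.continuousAt).comp
          this.continuousAt)).continuousWithinAt
      refine (h1.comp (hγ.continuous.continuousOn) hmem).congr ?_
      intro t ht
      exact hw (γ t) (hmem t ht) j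
    · exact ((continuous_apply j).comp (hγ.continuous_deriv le_rfl)).continuousOn
  have hint : IntervalIntegrable (fun t => ∑ j, w (γ t) j * deriv γ t j)
      MeasureTheory.volume u v := hcont.intervalIntegrable
  exact intervalIntegral.integral_eq_sub_of_hasDerivAt hderiv hint

theorem symm_snd {n : ℕ} {V : Set (Fin n → ℝ)} (hV : IsOpen V) {x : Fin n → ℝ} (hx : x ∈ V)
    {aV : (Fin n → ℝ) → ℝ} (haV : ContDiffOn ℝ (⊤ : ℕ∞) aV V) (j k : Fin n) :
    fderiv ℝ (fun y => fderiv ℝ aV y (Pi.single j 1)) x (Pi.single k 1)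
      = fderiv ℝ (fun y => fderiv ℝ aV y (Pi.single k 1)) x (Pi.single j 1) := by
  have hd2 : HasFDerivAt (fderiv ℝ aV) (fderiv ℝ (fderiv ℝ aV) x) x := by
    have : ContDiffAt ℝ 1 (fderiv ℝ aV) x :=
      (haV.contDiffAt (hV.mem_nhds hx)).fderiv_right (WithTop.coe_le_coe.2 le_top)
    exact (this.differentiableAt one_ne_zero).hasFDerivAt
  have hev : ∀ᶠ y in nhds x, HasFDerivAt aV (fderiv ℝ aV y) y := by
    filter_upwards [hV.mem_nhds hx] with y hy
    exact ((haV.contDiffAt (hV.mem_nhds hy)).differentiableAt (by simp)).hasFDerivAt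
  have hsymm := second_derivative_symmetric_of_eventually hev hd2
    (Pi.single k 1) (Pi.single j 1)
  have happ : ∀ v : Fin n → ℝ,
      fderiv ℝ (fun y => fderiv ℝ aV y v) x
        = (ContinuousLinearMap.apply ℝ ℝ v).comp (fderiv ℝ (fderiv ℝ aV) x) := by
    intro v
    exact (((ContinuousLinearMap.apply ℝ ℝ v).hasFDerivAt).comp x hd2).fderiv
  rw [happ, happ]
  simpa using hsymm


theorem pflux_affine {n : ℕ} (w : (Fin n → ℝ) → Fin n → ℝ) {γ : ℝ → Fin n → ℝ}
    (hγ : ContDiff ℝ 1 γ) {c : ℝ} (hc : c ≠ 0) (d u v : ℝ) :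
    pflux w (fun t => γ (c * t + d)) u v = pflux w γ (c*u+d) (c*v+d) := by
  have hder : ∀ t : ℝ, deriv (fun t => γ (c * t + d)) t = c • deriv γ (c*t+d) := by
    intro t
    have h1 : HasDerivAt (fun t : ℝ => c * t + d) c t := by
      simpa using ((hasDerivAt_id t).const_mul c).add_const d
    have h2 : HasDerivAt γ (deriv γ (c*t+d)) (c*t+d) :=
      ((hγ.differentiable one_ne_zero) _).hasDerivAt
    have := h2.scomp t h1
    simpa [smul_smul, mul_comm, Function.comp_def] using this.deriv
  unfold pflux
  have : (∫ t in u..v, ∑ j, w (γ (c*t+d)) j * deriv (fun t => γ (c * t + d)) t j)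
      = ∫ t in u..v, c * (∑ j, w (γ (c*t+d)) j * deriv γ (c*t+d) j) := by
    refine intervalIntegral.integral_congr fun t _ => ?_
    rw [hder t, Finset.mul_sum]
    refine Finset.sum_congr rfl fun i _ => by simp [Pi.smul_apply]; ring
  rw [this, intervalIntegral.integral_const_mul]
  rw [intervalIntegral.integral_comp_mul_add (fun s => ∑ j, w (γ s) j * deriv γ s j) hc d]
  simp [smul_eq_mul, mul_comm, ← mul_assoc, mul_inv_cancel₀ hc]

/-- A C¹ path from `x` to `y` inside `Ω`, constant near `t ≤ 0` and `t ≥ 1`. -/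
def GoodPath {n : ℕ} (Ω : Set (Fin n → ℝ)) (x y : Fin n → ℝ) (γ : ℝ → Fin n → ℝ) : Prop :=
  ContDiff ℝ 1 γ ∧ (∃ ε > (0:ℝ), ∀ t ≤ ε, γ t = x) ∧
    (∃ ε > (0:ℝ), ∀ t, 1 - ε ≤ t → γ t = y) ∧ ∀ t ∈ Icc (0:ℝ) 1, γ t ∈ Ω

namespace GoodPath

variable {n : ℕ} {Ω : Set (Fin n → ℝ)} {x y z : Fin n → ℝ} {γ γ' : ℝ → Fin n → ℝ}

theorem zero (h : GoodPath Ω x y γ) : γ 0 = x := by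
  obtain ⟨-, ⟨ε, hε, h0⟩, -, -⟩ := h; exact h0 0 hε.le

theorem one (h : GoodPath Ω x y γ) : γ 1 = y := by
  obtain ⟨-, -, ⟨ε, hε, h1⟩, -⟩ := h
  exact h1 1 (by linarith)

theorem mem_right (h : GoodPath Ω x y γ) : y ∈ Ω := by
  have := h.2.2.2 1 (by norm_num); rwa [h.one] at this

theorem refl (hx : x ∈ Ω) : GoodPath Ω x x (fun _ => x) :=
  ⟨contDiff_const, ⟨1, one_pos, fun _ _ => rfl⟩, ⟨1, one_pos, fun _ _ => rfl⟩,
    fun _ _ => hx⟩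

theorem rev (h : GoodPath Ω x y γ) : GoodPath Ω y x (fun t => γ (1 - t)) := by
  obtain ⟨hC, ⟨ε₁, hε₁, hs⟩, ⟨ε₂, hε₂, he⟩, hm⟩ := h
  refine ⟨hC.comp (contDiff_const.sub contDiff_id), ⟨ε₂, hε₂, fun t ht => he _ (by linarith)⟩,
    ⟨ε₁, hε₁, fun t ht => hs _ (by linarith)⟩, fun t ht => hm _ ?_⟩
  constructor <;> [linarith [ht.2]; linarith [ht.1]]

end GoodPath

/-- Concatenation of two paths. -/
noncomputable def catPath {n : ℕ} (γ γ' : ℝ → Fin n → ℝ) : ℝ → Fin n → ℝ :=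
  fun t => if t ≤ 1/2 then γ (2*t) else γ' (2*t - 1)

theorem catPath_left {n : ℕ} {γ γ' : ℝ → Fin n → ℝ} {y : Fin n → ℝ} {ε₁ ε₂ : ℝ}
    (hε₁ : 0 ≤ ε₁) (h1 : ∀ t, 1 - ε₁ ≤ t → γ t = y) (h2 : ∀ t ≤ ε₂, γ' t = y) :
    ∀ t < 1/2 + ε₂/2, catPath γ γ' t = γ (2*t) := by
  intro t ht
  by_cases h : t ≤ 1/2
  · rw [catPath, if_pos h]
  · push_neg at h
    rw [catPath]
    rw [if_neg (not_le.2 h), h2 _ (by linarith), h1 _ (by linarith)]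

theorem catPath_right {n : ℕ} {γ γ' : ℝ → Fin n → ℝ} {y : Fin n → ℝ} {ε₁ ε₂ : ℝ} (hε₂ : 0 ≤ ε₂)
    (h1 : ∀ t, 1 - ε₁ ≤ t → γ t = y) (h2 : ∀ t ≤ ε₂, γ' t = y) :
    ∀ t, 1/2 - ε₁/2 < t → catPath γ γ' t = γ' (2*t - 1) := by
  intro t ht
  by_cases h : t ≤ 1/2
  · rw [catPath]
    rw [if_pos h, h1 _ (by linarith), h2 _ (by linarith)]
  · rw [catPath, if_neg h]

theorem GoodPath.cat {n : ℕ} {Ω : Set (Fin n → ℝ)} {x y z : Fin n → ℝ} {γ γ' : ℝ → Fin n → ℝ}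
    (h : GoodPath Ω x y γ) (h' : GoodPath Ω y z γ') : GoodPath Ω x z (catPath γ γ') := by
  obtain ⟨hC, ⟨ε₃, hε₃, hs⟩, ⟨ε₁, hε₁, he⟩, hm⟩ := h
  obtain ⟨hC', ⟨ε₂, hε₂, hs'⟩, ⟨ε₄, hε₄, he'⟩, hm'⟩ := h'
  have hc₁ : ContDiff ℝ 1 (fun t => γ (2*t)) := hC.comp (contDiff_const.mul contDiff_id)
  have hc₂ : ContDiff ℝ 1 (fun t => γ' (2*t - 1)) :=
    hC'.comp ((contDiff_const.mul contDiff_id).sub contDiff_const)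
  refine ⟨?_, ⟨min (ε₃/2) (1/4), by positivity, fun t ht => ?_⟩,
    ⟨min (ε₄/2) (1/4), by positivity, fun t ht => ?_⟩, fun t ht => ?_⟩
  · rw [contDiff_iff_contDiffAt]
    intro t
    by_cases hlt : t < 1/2 + ε₂/2
    · refine hc₁.contDiffAt.congr_of_eventuallyEq ?_
      filter_upwards [isOpen_Iio.mem_nhds (show t ∈ Iio (1/2 + ε₂/2) from hlt)] with s hsx
      exact catPath_left hε₁.le he hs' s hsx
    · push_neg at hlt
      refine hc₂.contDiffAt.congr_of_eventuallyEq ?_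
      have : t ∈ Ioi (1/2 - ε₁/2) := by simp only [mem_Ioi]; linarith
      filter_upwards [isOpen_Ioi.mem_nhds this] with s hsx
      exact catPath_right hε₂.le he hs' s hsx
  · have ht4 : t ≤ 1/4 := le_trans ht (min_le_right _ _)
    have ht3 : t ≤ ε₃/2 := le_trans ht (min_le_left _ _)
    rw [catPath, if_pos (by linarith)]
    exact hs _ (by linarith)
  · have ht4 : 3/4 ≤ t := by have := min_le_right (ε₄/2) (1/4); linarith
    have ht3 : 1 - ε₄/2 ≤ t := by have := min_le_left (ε₄/2) (1/4); linarith
    rw [catPath, if_neg (by norm_num; linarith)]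
    exact he' _ (by linarith)
  · rw [catPath]
    by_cases hla : t ≤ 1/2
    · rw [if_pos hla]
      exact hm _ ⟨by linarith [ht.1], by linarith⟩
    · push_neg at hla
      rw [if_neg (not_le.2 hla)]
      exact hm' _ ⟨by linarith, by linarith [ht.2]⟩

theorem pflux_integrable {n : ℕ} {w : (Fin n → ℝ) → Fin n → ℝ} {Ω : Set (Fin n → ℝ)}
    (hwc : ∀ j, ContinuousOn (fun x => w x j) Ω) {c : ℝ → Fin n → ℝ} (hc : ContDiff ℝ 1 c)
    {u v : ℝ} (hmem : ∀ t ∈ uIcc u v, c t ∈ Ω) :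
    IntervalIntegrable (fun t => ∑ j, w (c t) j * deriv c t j) MeasureTheory.volume u v := by
  apply ContinuousOn.intervalIntegrable
  refine continuousOn_finset_sum _ fun j _ => ContinuousOn.mul
    ((hwc j).comp hc.continuous.continuousOn hmem)
    ((continuous_apply j).comp (hc.continuous_deriv le_rfl)).continuousOn

theorem pflux_rev {n : ℕ} (w : (Fin n → ℝ) → Fin n → ℝ) {γ : ℝ → Fin n → ℝ}
    (hγ : ContDiff ℝ 1 γ) :
    pflux w (fun t => γ (1 - t)) 0 1 = - pflux w γ 0 1 := by
  have hfun : (fun t : ℝ => γ (1 - t)) = fun t => γ ((-1) * t + 1) := by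
    funext t; ring_nf
  rw [hfun, pflux_affine w hγ (by norm_num : (-1:ℝ) ≠ 0) 1 0 1]
  norm_num
  exact intervalIntegral.integral_symm 0 1

theorem pflux_cat {n : ℕ} {w : (Fin n → ℝ) → Fin n → ℝ} {Ω : Set (Fin n → ℝ)}
    (hwc : ∀ j, ContinuousOn (fun x => w x j) Ω)
    {x y z : Fin n → ℝ} {γ γ' : ℝ → Fin n → ℝ}
    (h : GoodPath Ω x y γ) (h' : GoodPath Ω y z γ') :
    pflux w (catPath γ γ') 0 1 = pflux w γ 0 1 + pflux w γ' 0 1 := by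
  have hcat := h.cat h'
  obtain ⟨hCc, -, -, hmc⟩ := hcat
  obtain ⟨hC, ⟨ε₃, hε₃, hs⟩, ⟨ε₁, hε₁, he⟩, hm⟩ := h
  obtain ⟨hC', ⟨ε₂, hε₂, hs'⟩, ⟨ε₄, hε₄, he'⟩, hm'⟩ := h'
  have hmemc : ∀ a b : ℝ, 0 ≤ a → a ≤ b → b ≤ 1 → ∀ t ∈ uIcc a b, catPath γ γ' t ∈ Ω := by
    intro a b ha hab hb t ht
    rw [uIcc_of_le hab] at ht
    exact hmc t ⟨le_trans ha ht.1, le_trans ht.2 hb⟩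
  have hint1 : IntervalIntegrable (fun t => ∑ j, w (catPath γ γ' t) j * deriv (catPath γ γ') t j)
      MeasureTheory.volume 0 (1/2) :=
    pflux_integrable hwc hCc (hmemc 0 (1/2) le_rfl (by norm_num) (by norm_num))
  have hint2 : IntervalIntegrable (fun t => ∑ j, w (catPath γ γ' t) j * deriv (catPath γ γ') t j)
      MeasureTheory.volume (1/2) 1 :=
    pflux_integrable hwc hCc (hmemc (1/2) 1 (by norm_num) (by norm_num) le_rfl)
  have hsplit : pflux w (catPath γ γ') 0 1
      = pflux w (catPath γ γ') 0 (1/2) + pflux w (catPath γ γ') (1/2) 1 := by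
    unfold pflux
    exact (intervalIntegral.integral_add_adjacent_intervals hint1 hint2).symm
  -- left half
  have hc₁ : ContDiff ℝ 1 (fun t => γ (2*t)) := hC.comp (contDiff_const.mul contDiff_id)
  have hc₂ : ContDiff ℝ 1 (fun t => γ' (2*t - 1)) :=
    hC'.comp ((contDiff_const.mul contDiff_id).sub contDiff_const)
  have hleft : pflux w (catPath γ γ') 0 (1/2) = pflux w (fun t => γ (2*t)) 0 (1/2) := by
    unfold pflux
    refine intervalIntegral.integral_congr fun t ht => ?_
    rw [uIcc_of_le (by norm_num : (0:ℝ) ≤ 1/2)] at ht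
    have hev : catPath γ γ' =ᶠ[nhds t] fun t => γ (2*t) := by
      filter_upwards [isOpen_Iio.mem_nhds
        (show t ∈ Iio (1/2 + ε₂/2) by simp only [mem_Iio]; linarith [ht.2])] with s hsx
      exact catPath_left hε₁.le he hs' s hsx
    rw [hev.self_of_nhds, hev.deriv_eq]
  have hright : pflux w (catPath γ γ') (1/2) 1 = pflux w (fun t => γ' (2*t - 1)) (1/2) 1 := by
    unfold pflux
    refine intervalIntegral.integral_congr fun t ht => ?_
    rw [uIcc_of_le (by norm_num : (1:ℝ)/2 ≤ 1)] at ht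
    have hev : catPath γ γ' =ᶠ[nhds t] fun t => γ' (2*t - 1) := by
      filter_upwards [isOpen_Ioi.mem_nhds
        (show t ∈ Ioi (1/2 - ε₁/2) by simp only [mem_Ioi]; linarith [ht.1])] with s hsx
      exact catPath_right hε₂.le he hs' s hsx
    rw [hev.self_of_nhds, hev.deriv_eq]
  have e1 : pflux w (fun t => γ (2*t)) 0 (1/2) = pflux w γ 0 1 := by
    have hfun : (fun t : ℝ => γ (2*t)) = fun t => γ (2*t + 0) := by funext t; ring_nf
    rw [hfun, pflux_affine w hC (by norm_num : (2:ℝ) ≠ 0) 0 0 (1/2)]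
    norm_num
  have e2 : pflux w (fun t => γ' (2*t - 1)) (1/2) 1 = pflux w γ' 0 1 := by
    have hfun : (fun t : ℝ => γ' (2*t - 1)) = fun t => γ' (2*t + (-1)) := by funext t; ring_nf
    rw [hfun, pflux_affine w hC' (by norm_num : (2:ℝ) ≠ 0) (-1) (1/2) 1]
    norm_num
  rw [hsplit, hleft, hright, e1, e2]

theorem GoodPath.segment {n : ℕ} {Ω : Set (Fin n → ℝ)} {x y : Fin n → ℝ}
    (hseg : ∀ u ∈ Icc (0:ℝ) 1, x + u • (y - x) ∈ Ω) :
    GoodPath Ω x y (fun t => x + Real.smoothTransition (2*t - 1/2) • (y - x)) := by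
  refine ⟨?_, ⟨1/4, by norm_num, fun t ht => ?_⟩, ⟨1/4, by norm_num, fun t ht => ?_⟩,
    fun t ht => hseg _ ⟨Real.smoothTransition.nonneg _, Real.smoothTransition.le_one _⟩⟩
  · exact contDiff_const.add
      ((Real.smoothTransition.contDiff.comp
        ((contDiff_const.mul contDiff_id).sub contDiff_const)).smul contDiff_const)
  · show x + Real.smoothTransition (2*t - 1/2) • (y - x) = x
    rw [Real.smoothTransition.zero_of_nonpos (by linarith), zero_smul, add_zero]
  · show x + Real.smoothTransition (2*t - 1/2) • (y - x) = y
    rw [Real.smoothTransition.one_of_one_le (by linarith), one_smul, add_sub_cancel]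

theorem reach_component {n : ℕ} {Ω : Set (Fin n → ℝ)} (hΩ : IsOpen Ω) {x : Fin n → ℝ}
    (hx : x ∈ Ω) : ∀ y ∈ connectedComponentIn Ω x, ∃ γ, GoodPath Ω x y γ := by
  classical
  set u := {z | ∃ γ, GoodPath Ω x z γ} with hu_def
  set v := {z | z ∈ Ω ∧ ¬ ∃ γ, GoodPath Ω x z γ} with hv_def
  have segball : ∀ z r (p q : Fin n → ℝ), Metric.ball z r ⊆ Ω → p ∈ Metric.ball z r →
      q ∈ Metric.ball z r → GoodPath Ω p q
        (fun t => p + Real.smoothTransition (2*t - 1/2) • (q - p)) := by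
    intro z r p q hball hp hq
    exact GoodPath.segment fun s hs =>
      hball ((convex_ball z r).add_smul_sub_mem hp hq hs)
  have hu : IsOpen u := by
    rw [Metric.isOpen_iff]
    rintro z ⟨γ, hγ⟩
    obtain ⟨r, hr, hball⟩ := Metric.isOpen_iff.1 hΩ z hγ.mem_right
    refine ⟨r, hr, fun z' hz' => ?_⟩
    exact ⟨_, hγ.cat (segball z r z z' hball (Metric.mem_ball_self hr) hz')⟩
  have hv : IsOpen v := by
    rw [Metric.isOpen_iff]
    rintro z ⟨hzΩ, hnz⟩
    obtain ⟨r, hr, hball⟩ := Metric.isOpen_iff.1 hΩ z hzΩ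
    refine ⟨r, hr, fun z' hz' => ⟨hball hz', fun hz'' => hnz ?_⟩⟩
    obtain ⟨γ, hγ⟩ := hz''
    exact ⟨_, hγ.cat (segball z r z' z hball hz' (Metric.mem_ball_self hr))⟩
  have hdisj : Disjoint u v := by
    rw [Set.disjoint_left]
    rintro z hz ⟨-, hz2⟩
    exact hz2 hz
  have hsub : connectedComponentIn Ω x ⊆ u ∪ v := by
    intro z hz
    by_cases h : ∃ γ, GoodPath Ω x z γ
    · exact Or.inl h
    · exact Or.inr ⟨connectedComponentIn_subset Ω x hz, h⟩
  have hne : (connectedComponentIn Ω x ∩ u).Nonempty :=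
    ⟨x, mem_connectedComponentIn hx, ⟨_, GoodPath.refl hx⟩⟩
  exact fun y hy =>
    (isPreconnected_connectedComponentIn.subset_left_of_subset_union hu hv hdisj hsub hne) hy




theorem homotopy_invariant {n : ℕ} {Ω : Set (Fin n → ℝ)}
    {w : (Fin n → ℝ) → Fin n → ℝ}
    (hwc : ∀ j, ContinuousOn (fun x => w x j) Ω)
    (hloc : ∀ x ∈ Ω, ∃ V, IsOpen V ∧ x ∈ V ∧ V ⊆ Ω ∧ ∃ aV, ContDiffOn ℝ (⊤ : ℕ∞) aV V ∧
      ∀ y ∈ V, ∀ j, w y j = fderiv ℝ aV y (Pi.single j 1))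
    {H : ℝ → ℝ → Fin n → ℝ} (hH : ContDiff ℝ 1 (fun q : ℝ × ℝ => H q.1 q.2))
    (hloop : ∀ s, H s 0 = H s 1)
    (hmem : ∀ s ∈ Icc (0:ℝ) 1, ∀ t ∈ Icc (0:ℝ) 1, H s t ∈ Ω) :
    pflux w (H 0) 0 1 = pflux w (H 1) 0 1 := by
  classical
  set S : Set (ℝ × ℝ) := Icc (0:ℝ) 1 ×ˢ Icc (0:ℝ) 1 with hS_def
  have hScomp : IsCompact S := isCompact_Icc.prod isCompact_Icc
  have hrow : ∀ s : ℝ, ContDiff ℝ 1 (H s) :=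
    fun s => hH.comp (contDiff_const.prodMk contDiff_id)
  have hcol : ∀ t : ℝ, ContDiff ℝ 1 (fun s => H s t) :=
    fun t => hH.comp (contDiff_id.prodMk contDiff_const)
  have hmem' : ∀ i : {q : ℝ × ℝ // q ∈ S}, H i.1.1 i.1.2 ∈ Ω :=
    fun i => hmem i.1.1 i.2.1 i.1.2 i.2.2
  have h := fun i : {q : ℝ × ℝ // q ∈ S} => hloc (H i.1.1 i.1.2) (hmem' i)
  choose V hVopen hxV hVΩ aV haV hwV using h
  obtain ⟨δ, hδ, hcov⟩ := lebesgue_number_lemma_of_metric hScomp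
    (fun i => (hVopen i).preimage hH.continuous)
    (fun q hq => mem_iUnion.2 ⟨⟨q, hq⟩, hxV ⟨q, hq⟩⟩)
  set N : ℕ := ⌈1/δ⌉₊ + 1 with hN_def
  have hN0 : (0:ℝ) < N := by positivity
  have hNδ : (1:ℝ)/N < δ := by
    rw [div_lt_iff₀ hN0]
    have h1 : 1/δ < (N:ℝ) := by
      have h2 : (1/δ : ℝ) ≤ (⌈1/δ⌉₊ : ℝ) := Nat.le_ceil _
      have h3 : ((⌈1/δ⌉₊ : ℝ)) < N := by
        rw [hN_def]; push_cast; linarith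
      linarith
    calc (1:ℝ) = δ * (1/δ) := by field_simp
    _ < δ * N := by exact mul_lt_mul_of_pos_left h1 hδ
  -- each grid square is mapped into some V with a primitive
  have key : ∀ i k : ℕ, i + 1 ≤ N → k + 1 ≤ N →
      ∃ (V' : Set (Fin n → ℝ)) (aV' : (Fin n → ℝ) → ℝ), IsOpen V' ∧
        ContDiffOn ℝ (⊤ : ℕ∞) aV' V' ∧
        (∀ y ∈ V', ∀ j, w y j = fderiv ℝ aV' y (Pi.single j 1)) ∧
        ∀ s t : ℝ, s ∈ Icc ((i:ℝ)/N) ((i+1)/N) → t ∈ Icc ((k:ℝ)/N) ((k+1)/N) →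
          H s t ∈ V' := by
    intro i k hi hk
    have hiN : ((i:ℝ)/N) ∈ Icc (0:ℝ) 1 := by
      constructor
      · positivity
      · rw [div_le_one hN0]; exact_mod_cast Nat.le_of_succ_le hi
    have hkN : ((k:ℝ)/N) ∈ Icc (0:ℝ) 1 := by
      constructor
      · positivity
      · rw [div_le_one hN0]; exact_mod_cast Nat.le_of_succ_le hk
    obtain ⟨i₀, hball⟩ := hcov ((i:ℝ)/N, (k:ℝ)/N) ⟨hiN, hkN⟩
    refine ⟨V i₀, aV i₀, hVopen i₀, haV i₀, hwV i₀, fun s t hs ht => ?_⟩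
    have : ((s, t) : ℝ × ℝ) ∈ Metric.ball (((i:ℝ)/N, (k:ℝ)/N) : ℝ × ℝ) δ := by
      rw [Metric.mem_ball, Prod.dist_eq]
      have h1N : ((i:ℝ)+1)/N - (i:ℝ)/N = 1/N := by field_simp; ring
      have h2N : ((k:ℝ)+1)/N - (k:ℝ)/N = 1/N := by field_simp; ring
      have hd1 : dist s ((i:ℝ)/N) < δ := by
        rw [Real.dist_eq, abs_lt]
        constructor <;> [linarith [hs.1, hδ, hN0.le]; linarith [hs.2, hNδ, h1N]]
      have hd2 : dist t ((k:ℝ)/N) < δ := by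
        rw [Real.dist_eq, abs_lt]
        constructor <;> [linarith [ht.1, hδ, hN0.le]; linarith [ht.2, hNδ, h2N]]
      exact max_lt hd1 hd2
    exact hball this
  -- flux at parameter s
  set Fl : ℝ → ℝ := fun s => pflux w (H s) 0 1 with hFl_def
  have hdivle : ∀ m : ℕ, ((m:ℝ)/N) ≤ ((m:ℝ)+1)/N := by
    intro m
    gcongr
    linarith
  have hsub01 : ∀ (k : ℕ), k + 1 ≤ N → ∀ t ∈ Icc ((k:ℝ)/N) (((k:ℝ)+1)/N), t ∈ Icc (0:ℝ) 1 := by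
    intro k hk t ht
    have h0 : (0:ℝ) ≤ (k:ℝ)/N := by positivity
    have h1 : ((k:ℝ)+1)/N ≤ 1 := by
      rw [div_le_one hN0]; exact_mod_cast hk
    exact ⟨le_trans h0 ht.1, le_trans ht.2 h1⟩
  have hsum : ∀ s ∈ Icc (0:ℝ) 1,
      Fl s = ∑ k ∈ Finset.range N, pflux w (H s) ((k:ℝ)/N) (((k:ℝ)+1)/N) := by
    intro s hs
    have hint : ∀ k : ℕ, k < N → IntervalIntegrable
        (fun t => ∑ j, w (H s t) j * deriv (H s) t j) MeasureTheory.volume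
        ((k:ℝ)/N) (((k+1:ℕ):ℝ)/N) := by
      intro k hk
      refine pflux_integrable hwc (hrow s) fun t ht => ?_
      have hc : ((k+1:ℕ):ℝ) = (k:ℝ)+1 := by push_cast; ring
      rw [hc, uIcc_of_le (hdivle k)] at ht
      exact hmem s hs t (hsub01 k hk t ht)
    have := intervalIntegral.sum_integral_adjacent_intervals
      (f := fun t => ∑ j, w (H s t) j * deriv (H s) t j)
      (a := fun k : ℕ => (k:ℝ)/N) (n := N) hint
    simp only [Nat.cast_zero, zero_div, div_self hN0.ne'] at this
    rw [hFl_def]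
    show pflux w (H s) 0 1 = _
    unfold pflux
    rw [← this]
    refine Finset.sum_congr rfl fun k _ => ?_
    have hc : ((k+1:ℕ):ℝ) = (k:ℝ)+1 := by push_cast; ring
    rw [hc]
  have hsq : ∀ i k : ℕ, i + 1 ≤ N → k + 1 ≤ N →
      pflux w (H ((i:ℝ)/N)) ((k:ℝ)/N) (((k:ℝ)+1)/N)
        - pflux w (H (((i:ℝ)+1)/N)) ((k:ℝ)/N) (((k:ℝ)+1)/N)
      = pflux w (fun s => H s ((k:ℝ)/N)) ((i:ℝ)/N) (((i:ℝ)+1)/N)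
        - pflux w (fun s => H s (((k:ℝ)+1)/N)) ((i:ℝ)/N) (((i:ℝ)+1)/N) := by
    intro i k hi hk
    obtain ⟨V', aV', hV'o, haV', hwV', hV'mem⟩ := key i k hi hk
    have hIs : (i:ℝ)/N ∈ Icc ((i:ℝ)/N) (((i:ℝ)+1)/N) := ⟨le_rfl, hdivle i⟩
    have hIs' : ((i:ℝ)+1)/N ∈ Icc ((i:ℝ)/N) (((i:ℝ)+1)/N) := ⟨hdivle i, le_rfl⟩
    have hIt : (k:ℝ)/N ∈ Icc ((k:ℝ)/N) (((k:ℝ)+1)/N) := ⟨le_rfl, hdivle k⟩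
    have hIt' : ((k:ℝ)+1)/N ∈ Icc ((k:ℝ)/N) (((k:ℝ)+1)/N) := ⟨hdivle k, le_rfl⟩
    rw [pflux_eq_sub hV'o haV' hwV' (hrow _) (fun t ht => by
        rw [uIcc_of_le (hdivle k)] at ht; exact hV'mem _ _ hIs ht),
      pflux_eq_sub hV'o haV' hwV' (hrow _) (fun t ht => by
        rw [uIcc_of_le (hdivle k)] at ht; exact hV'mem _ _ hIs' ht),
      pflux_eq_sub hV'o haV' hwV' (hcol _) (fun u hu => by
        rw [uIcc_of_le (hdivle i)] at hu; exact hV'mem _ _ hu hIt),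
      pflux_eq_sub hV'o haV' hwV' (hcol _) (fun u hu => by
        rw [uIcc_of_le (hdivle i)] at hu; exact hV'mem _ _ hu hIt')]
    ring
  have hstep : ∀ i : ℕ, i + 1 ≤ N → Fl ((i:ℝ)/N) = Fl (((i:ℝ)+1)/N) := by
    intro i hi
    have hs1 : ((i:ℝ)/N) ∈ Icc (0:ℝ) 1 :=
      ⟨by positivity, by rw [div_le_one hN0]; exact_mod_cast Nat.le_of_succ_le hi⟩
    have hs2 : (((i:ℝ)+1)/N) ∈ Icc (0:ℝ) 1 :=
      ⟨by positivity, by rw [div_le_one hN0]; exact_mod_cast hi⟩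
    have htel : ∑ k ∈ Finset.range N,
        (pflux w (fun s => H s ((k:ℝ)/N)) ((i:ℝ)/N) (((i:ℝ)+1)/N)
          - pflux w (fun s => H s (((k:ℝ)+1)/N)) ((i:ℝ)/N) (((i:ℝ)+1)/N)) = 0 := by
      have htel' := Finset.sum_range_sub'
        (f := fun k : ℕ => pflux w (fun s => H s ((k:ℝ)/N)) ((i:ℝ)/N) (((i:ℝ)+1)/N)) N
      simp only [Nat.cast_add, Nat.cast_one] at htel'
      rw [htel']
      have h0 : (fun s => H s ((0:ℝ)/N)) = fun s => H s ((N:ℝ)/N) := by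
        funext s
        rw [zero_div, div_self hN0.ne']
        exact hloop s
      rw [show ((0:ℕ):ℝ)/N = (0:ℝ)/N by norm_num, h0]
      simp
    have := Finset.sum_congr rfl fun k (hk : k ∈ Finset.range N) =>
      hsq i k hi (Finset.mem_range.1 hk)
    rw [hsum _ hs1, hsum _ hs2, ← sub_eq_zero, ← Finset.sum_sub_distrib, this, htel]
  have hind : ∀ m : ℕ, m ≤ N → Fl 0 = Fl ((m:ℝ)/N) := by
    intro m
    induction m with
    | zero => intro _; norm_num
    | succ p ih =>
      intro hp
      rw [ih (Nat.le_of_succ_le hp)]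
      have := hstep p hp
      rw [this]
      norm_num
  have hfin := hind N le_rfl
  rw [div_self hN0.ne'] at hfin
  exact hfin

/-- for a locally static stationary metric `g` on `Ω`, the 1-form
`ω = Σⱼ (g_{j0}/g₀₀) dxⱼ` is closed, has zero flux around closed curves contained in a
neighborhood where `g_{j0} = g₀₀ ∂ⱼa_V`, its flux depends only on the homotopy class
of the closed curve, and `g` is globally isometric to a static metric via
`x₀' = x₀ + a(x)` if and only if all the fluxes vanish (i.e. `ω` is exact). -/
theorem locally_static_metric_flux
    {n : ℕ} (Ω : Set (Fin n → ℝ)) (hΩ : IsOpen Ω)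
    (G : (Fin n → ℝ) → Fin (n + 1) → Fin (n + 1) → ℝ)
    (hGsymm : ∀ x ∈ Ω, ∀ j k, G x j k = G x k j)
    (hG00 : ∀ x ∈ Ω, 0 < G x 0 0)
    (hGsmooth : ∀ j k, ContDiffOn ℝ (⊤ : ℕ∞) (fun x => G x j k) Ω)
    (hlocstatic : ∀ x ∈ Ω, ∃ V : Set (Fin n → ℝ), IsOpen V ∧ x ∈ V ∧ V ⊆ Ω ∧
      ∃ aV : (Fin n → ℝ) → ℝ, ContDiffOn ℝ (⊤ : ℕ∞) aV V ∧
        ∀ y ∈ V, ∀ j : Fin n,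
          G y j.succ 0 = G y 0 0 * fderiv ℝ aV y (Pi.single j 1)) :
    -- `ω` is closed on `Ω`
    (∀ x ∈ Ω, ∀ j k : Fin n,
      fderiv ℝ (fun y => G y j.succ 0 / G y 0 0) x (Pi.single k 1)
        = fderiv ℝ (fun y => G y k.succ 0 / G y 0 0) x (Pi.single j 1)) ∧
    -- zero flux for closed curves in a static neighborhood
    (∀ V : Set (Fin n → ℝ), IsOpen V → V ⊆ Ω →
      ∀ aV : (Fin n → ℝ) → ℝ, ContDiffOn ℝ (⊤ : ℕ∞) aV V →
      (∀ y ∈ V, ∀ j : Fin n,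
        G y j.succ 0 = G y 0 0 * fderiv ℝ aV y (Pi.single j 1)) →
      ∀ γ : ℝ → Fin n → ℝ, ContDiff ℝ 1 γ → γ 0 = γ 1 →
        (∀ t ∈ Icc (0 : ℝ) 1, γ t ∈ V) → gravFlux G γ = 0) ∧
    -- the flux depends only on the homotopy class of the closed curve in `Ω`
    (∀ γ₀ γ₁ : ℝ → Fin n → ℝ,
      ContDiff ℝ 1 γ₀ → ContDiff ℝ 1 γ₁ →
      γ₀ 0 = γ₀ 1 → γ₁ 0 = γ₁ 1 →
      (∀ t ∈ Icc (0 : ℝ) 1, γ₀ t ∈ Ω) → (∀ t ∈ Icc (0 : ℝ) 1, γ₁ t ∈ Ω) →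
      (∃ H : ℝ → ℝ → Fin n → ℝ,
        ContDiff ℝ 1 (fun q : ℝ × ℝ => H q.1 q.2) ∧
        (∀ t, H 0 t = γ₀ t) ∧ (∀ t, H 1 t = γ₁ t) ∧
        (∀ s, H s 0 = H s 1) ∧
        (∀ s ∈ Icc (0 : ℝ) 1, ∀ t ∈ Icc (0 : ℝ) 1, H s t ∈ Ω)) →
      gravFlux G γ₀ = gravFlux G γ₁) ∧
    -- global staticity via `x₀' = x₀ + a(x)` iff all fluxes vanish
    ((∃ a : (Fin n → ℝ) → ℝ, ContDiffOn ℝ (⊤ : ℕ∞) a Ω ∧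
        ∀ x ∈ Ω, ∀ j : Fin n,
          G x j.succ 0 = G x 0 0 * fderiv ℝ a x (Pi.single j 1)) ↔
      (∀ γ : ℝ → Fin n → ℝ, ContDiff ℝ 1 γ → γ 0 = γ 1 →
        (∀ t ∈ Icc (0 : ℝ) 1, γ t ∈ Ω) → gravFlux G γ = 0)) := by
  classical
  set w : (Fin n → ℝ) → Fin n → ℝ := fun x j => G x j.succ 0 / G x 0 0 with hw_def
  have hgrav : ∀ γ : ℝ → Fin n → ℝ, gravFlux G γ = pflux w γ 0 1 := fun γ => rfl
  have hwc : ∀ j, ContinuousOn (fun x => w x j) Ω := fun j =>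
    (hGsmooth j.succ 0).continuousOn.div (hGsmooth 0 0).continuousOn
      (fun x hx => (hG00 x hx).ne')
  have hwV : ∀ (V : Set (Fin n → ℝ)), V ⊆ Ω → ∀ (aV : (Fin n → ℝ) → ℝ),
      (∀ y ∈ V, ∀ j, G y j.succ 0 = G y 0 0 * fderiv ℝ aV y (Pi.single j 1)) →
      ∀ y ∈ V, ∀ j, w y j = fderiv ℝ aV y (Pi.single j 1) := by
    intro V hVΩ aV hrel y hy j
    show G y j.succ 0 / G y 0 0 = _
    rw [hrel y hy j, mul_comm, mul_div_assoc, div_self (hG00 y (hVΩ hy)).ne', mul_one]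
  have hloc' : ∀ x ∈ Ω, ∃ V, IsOpen V ∧ x ∈ V ∧ V ⊆ Ω ∧ ∃ aV, ContDiffOn ℝ (⊤ : ℕ∞) aV V ∧
      ∀ y ∈ V, ∀ j, w y j = fderiv ℝ aV y (Pi.single j 1) := by
    intro x hx
    obtain ⟨V, hVo, hxV, hVΩ, aV, haV, hrel⟩ := hlocstatic x hx
    exact ⟨V, hVo, hxV, hVΩ, aV, haV, hwV V hVΩ aV hrel⟩
  refine ⟨?_, ?_, ?_, ?_⟩
  · -- closedness
    intro x hx j k
    obtain ⟨V, hVo, hxV, hVΩ, aV, haV, hrel⟩ := hlocstatic x hx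
    have h1 : ∀ m : Fin n, fderiv ℝ (fun y => G y m.succ 0 / G y 0 0) x
        = fderiv ℝ (fun y => fderiv ℝ aV y (Pi.single m 1)) x := by
      intro m
      apply Filter.EventuallyEq.fderiv_eq
      filter_upwards [hVo.mem_nhds hxV] with y hy
      rw [hrel y hy m, mul_comm, mul_div_assoc, div_self (hG00 y (hVΩ hy)).ne', mul_one]
    rw [h1 j, h1 k]
    exact symm_snd hVo hxV haV j k
  · -- zero flux in a static neighborhood
    intro V hVo hVΩ aV haV hrel γ hγ hcl hmemV
    rw [hgrav, pflux_eq_sub hVo haV (hwV V hVΩ aV hrel) hγ (fun t ht => by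
      rw [uIcc_of_le zero_le_one] at ht; exact hmemV t ht), hcl, sub_self]
  · -- homotopy invariance
    rintro γ₀ γ₁ hγ₀ hγ₁ h00 h11 hm0 hm1 ⟨H, hH, hH0, hH1, hHloop, hHΩ⟩
    have h0 : H 0 = γ₀ := funext hH0
    have h1 : H 1 = γ₁ := funext hH1
    rw [hgrav, hgrav, ← h0, ← h1]
    exact homotopy_invariant hwc hloc' hH hHloop hHΩ
  · constructor
    · -- exact ⇒ fluxes vanish
      rintro ⟨a, haC, harel⟩ γ hγ hcl hmemΩ
      rw [hgrav, pflux_eq_sub hΩ haC (hwV Ω (subset_refl Ω) a harel) hγ (fun t ht => by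
        rw [uIcc_of_le zero_le_one] at ht; exact hmemΩ t ht), hcl, sub_self]
    · -- fluxes vanish ⇒ exact
      intro hvanish
      set base : Set (Fin n → ℝ) → (Fin n → ℝ) :=
        fun S => if h : S.Nonempty then h.choose else 0 with hbase_def
      set b : (Fin n → ℝ) → (Fin n → ℝ) := fun x => base (connectedComponentIn Ω x)
        with hb_def
      have hbmem : ∀ x ∈ Ω, b x ∈ connectedComponentIn Ω x := by
        intro x hx
        have hne : (connectedComponentIn Ω x).Nonempty := ⟨x, mem_connectedComponentIn hx⟩
        show base _ ∈ _
        rw [hbase_def]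
        simp only [dif_pos hne]
        exact hne.choose_spec
      have hbΩ : ∀ x ∈ Ω, b x ∈ Ω := fun x hx =>
        connectedComponentIn_subset Ω x (hbmem x hx)
      have hbeq : ∀ x ∈ Ω, ∀ y, y ∈ connectedComponentIn Ω x → b y = b x := by
        intro x hx y hy
        show base (connectedComponentIn Ω y) = base (connectedComponentIn Ω x)
        rw [← connectedComponentIn_eq hy]
      have hR : ∀ x, x ∈ Ω → ∃ γ, GoodPath Ω (b x) x γ := by
        intro x hx
        have h1 : x ∈ connectedComponentIn Ω (b x) := by
          rw [← connectedComponentIn_eq (hbmem x hx)]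
          exact mem_connectedComponentIn hx
        exact reach_component hΩ (hbΩ x hx) x h1
      choose γp hγp using hR
      set a : (Fin n → ℝ) → ℝ :=
        fun x => if hx : x ∈ Ω then pflux w (γp x hx) 0 1 else 0 with ha_def
      have haval : ∀ x (hx : x ∈ Ω), a x = pflux w (γp x hx) 0 1 := fun x hx => dif_pos hx
      have hkey : ∀ x, x ∈ Ω → ∃ (r : ℝ), 0 < r ∧ Metric.ball x r ⊆ Ω ∧
          ∃ aV : (Fin n → ℝ) → ℝ, ContDiffAt ℝ (⊤ : ℕ∞) aV x ∧
            (∀ j, w x j = fderiv ℝ aV x (Pi.single j 1)) ∧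
            ∀ y ∈ Metric.ball x r, a y = (a x - aV x) + aV y := by
        intro x hx
        obtain ⟨V, hVo, hxV, hVΩ, aV, haV, hrelw⟩ := hloc' x hx
        obtain ⟨r, hr, hball⟩ := Metric.isOpen_iff.1 hVo x hxV
        have hballΩ : Metric.ball x r ⊆ Ω := fun z hz => hVΩ (hball hz)
        refine ⟨r, hr, hballΩ, aV, haV.contDiffAt (hVo.mem_nhds hxV), hrelw x hxV, ?_⟩
        intro y hy
        have hyV : y ∈ V := hball hy
        have hyΩ : y ∈ Ω := hVΩ hyV
        have hycomp : y ∈ connectedComponentIn Ω x :=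
          (convex_ball x r).isPreconnected.subset_connectedComponentIn
            (Metric.mem_ball_self hr) hballΩ hy
        have hby : b y = b x := hbeq x hx y hycomp
        have hγx : GoodPath Ω (b x) x (γp x hx) := hγp x hx
        have hγy : GoodPath Ω (b x) y (γp y hyΩ) := hby ▸ hγp y hyΩ
        have hseg : GoodPath Ω x y
            (fun t => x + Real.smoothTransition (2*t - 1/2) • (y - x)) :=
          GoodPath.segment (fun u hu => hballΩ
            ((convex_ball x r).add_smul_sub_mem (Metric.mem_ball_self hr) hy hu))
        have hrev := hγy.rev
        have hloop := (hγx.cat hseg).cat hrev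
        have hflux := hvanish _ hloop.1 (hloop.zero.trans hloop.one.symm) hloop.2.2.2
        rw [hgrav, pflux_cat hwc (hγx.cat hseg) hrev, pflux_cat hwc hγx hseg,
          pflux_rev w hγy.1] at hflux
        have hsegflux : pflux w
            (fun t => x + Real.smoothTransition (2*t - 1/2) • (y - x)) 0 1
            = aV y - aV x := by
          rw [pflux_eq_sub hVo haV hrelw hseg.1 (fun t ht => hball
            ((convex_ball x r).add_smul_sub_mem (Metric.mem_ball_self hr) hy
              ⟨Real.smoothTransition.nonneg _, Real.smoothTransition.le_one _⟩))]
          rw [hseg.one, hseg.zero]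
        rw [hsegflux, ← haval x hx, ← haval y hyΩ] at hflux
        linarith
      refine ⟨a, ?_, ?_⟩
      · intro x hx
        obtain ⟨r, hr, hrΩ, aV, haVx, hwx, hlocal⟩ := hkey x hx
        have hev : a =ᶠ[nhds x] fun y => (a x - aV x) + aV y := by
          filter_upwards [Metric.ball_mem_nhds x hr] with y hy
          exact hlocal y hy
        exact ((contDiffAt_const.add haVx).congr_of_eventuallyEq hev).contDiffWithinAt
      · intro x hx j
        obtain ⟨r, hr, hrΩ, aV, haVx, hwx, hlocal⟩ := hkey x hx
        have hev : a =ᶠ[nhds x] fun y => (a x - aV x) + aV y := by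
          filter_upwards [Metric.ball_mem_nhds x hr] with y hy
          exact hlocal y hy
        have hfd : fderiv ℝ a x = fderiv ℝ aV x := by
          rw [hev.fderiv_eq, fderiv_const_add]
        rw [hfd, ← hwx j]
        show G x j.succ 0 = G x 0 0 * (G x j.succ 0 / G x 0 0)
        field_simp [(hG00 x hx).ne']
end
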